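/- arXiv:2305.06736 — 9 statements merged into one kernel-verified Lean document; each statement's English description precedes it below -/
import Mathlib

section
/- Let E be a Hausdorff locally convex topological vector space and F ⊂ E a nonempty set which is weak-admissible at x̂ ∈ F, determined by the family C. If x̂ ∈ F \ int(F), then inf_{φ ∈ C} φ(x̂) = 0. -/
open Topology Filter Set

noncomputable section

section Defs

variable {E : Type*} [AddCommGroup E] [Module ℝ E] [TopologicalSpace E]

/-- The canonical map from the topological dual of `E` to the weak-star dual. -/
def toWD (φ : E →L[ℝ] ℝ) : WeakDual ℝ E := φ

/-- The weak-star closed convex hull of a set of continuous linear functionals. -/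
def wcch (B : Set (E →L[ℝ] ℝ)) : Set (WeakDual ℝ E) :=
  closure (convexHull ℝ (toWD '' B))

/-- `f` is Gateaux differentiable at `x` with Gateaux-differential `f'`. -/
def HasGateauxAt (f : E → ℝ) (f' : E →L[ℝ] ℝ) (x : E) : Prop :=
  ∀ v : E, Tendsto (fun t : ℝ => (f (x + t • v) - f x - t * f' v) / t) (𝓝[>] 0) (𝓝 0)

/-- The family `C` is equi-Gateaux differentiable at `x`, with differentials given by `D`. -/
def EquiGateauxAt (C : Set (E → ℝ)) (D : (E → ℝ) → E →L[ℝ] ℝ) (x : E) : Prop :=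
  (∀ φ ∈ C, HasGateauxAt φ (D φ) x) ∧
  ∀ v : E, ∀ ε : ℝ, 0 < ε → ∃ δ : ℝ, 0 < δ ∧ ∀ t : ℝ, 0 < t → t < δ →
    ∀ φ ∈ C, |(φ (x + t • v) - φ x - t * (D φ) v) / t| ≤ ε

/-- The family `C` is equi-lower semicontinuous at `x`. -/
def EquiLscAt (C : Set (E → ℝ)) (x : E) : Prop :=
  ∀ ε : ℝ, 0 < ε → ∃ O ∈ 𝓝 x, ∀ y ∈ O, ∀ φ ∈ C, φ y - φ x > -ε

/-- `[C]^× = {x ∈ E : φ(x) ≥ 0 for all φ ∈ C}`. -/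
def polarSet (C : Set (E → ℝ)) : Set E := {x | ∀ φ ∈ C, 0 ≤ φ x}

/-- The multiplier set `T_C(x̂)`. -/
def multSet (C : Set (E → ℝ)) (D : (E → ℝ) → E →L[ℝ] ℝ) (x : E) : Set (WeakDual ℝ E) :=
  ⋂ n ∈ {n : ℕ | 1 ≤ n}, wcch (D '' {φ | φ ∈ C ∧ φ x ∈ Icc (0:ℝ) (1/(n:ℝ))})

/-- `F` is weak-admissible at `x ∈ F`, determined by `C` (with differentials `D`). -/
def WeakAdmissibleAt (F : Set E) (C : Set (E → ℝ)) (D : (E → ℝ) → E →L[ℝ] ℝ) (x : E) : Prop :=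
  x ∈ F ∧ C.Nonempty ∧ F = polarSet C ∧ EquiGateauxAt C D x ∧
    ({φ | φ ∈ C ∧ φ x ≠ 0} = ∅ ∨ EquiLscAt {φ | φ ∈ C ∧ φ x ≠ 0} x) ∧
    IsCompact (wcch (D '' C))

end Defs

section NormedDefs

variable {Y : Type*} [NormedAddCommGroup Y] [NormedSpace ℝ Y]

/-- `A` is admissible at `x ∈ A`, determined by `C` (with differentials `D`). -/
def AdmissibleAt (A : Set Y) (C : Set (Y → ℝ)) (D : (Y → ℝ) → Y →L[ℝ] ℝ) (x : Y) : Prop :=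
  x ∈ A ∧ C.Nonempty ∧ A = polarSet C ∧ EquiGateauxAt C D x ∧
    (∃ r : NNReal, ∃ ε : ℝ, 0 < ε ∧ ∀ φ ∈ C, LipschitzOnWith r φ (Metric.ball x ε)) ∧
    toWD (0 : Y →L[ℝ] ℝ) ∉ wcch (D '' C)

/-- The recession cone of a set. -/
def recCone (K : Set Y) : Set Y := {v | ∀ l : ℝ, 0 < l → ∀ x ∈ K, x + l • v ∈ K}

/-- The barrier cone of `K`: functionals bounded above on `K`. -/
def barCone (K : Set Y) : Set (Y →L[ℝ] ℝ) := {φ | BddAbove (φ '' K)}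

/-- The dual positive cone `A*`. -/
def posDualCone (A : Set Y) : Set (Y →L[ℝ] ℝ) := {φ | ∀ y ∈ A, 0 ≤ φ y}

end NormedDefs

/- If every `φ ∈ C` satisfies `φ x̂ ≥ m > 0`, then `S = C`, and equi-lower
semicontinuity with tolerance `m` keeps all `φ` nonnegative on a neighbourhood of `x̂`,
which therefore lies in `F = [C]^×`; so `x̂` would be interior. -/

theorem EquiLscAt.mem_interior_polarSet
    {E : Type*} [AddCommGroup E] [Module ℝ E] [TopologicalSpace E]
    {C : Set (E → ℝ)} {x : E} {m : ℝ} (hC : EquiLscAt C x) (hm : 0 < m)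
    (hmC : ∀ φ ∈ C, m ≤ φ x) : x ∈ interior (polarSet C) := by
  obtain ⟨O, hO, hOC⟩ := hC m hm
  refine mem_interior_iff_mem_nhds.2 (mem_of_superset hO fun y hy φ hφ => ?_)
  linarith [hOC y hy φ hφ, hmC φ hφ]

theorem inf_eq_zero_of_boundary_general
    {E : Type*} [AddCommGroup E] [Module ℝ E] [TopologicalSpace E]
    (F : Set E) (C : Set (E → ℝ)) (D : (E → ℝ) → E →L[ℝ] ℝ) (xh : E)
    (hadm : WeakAdmissibleAt F C D xh)
    (hx : xh ∈ F \ interior F) :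
    sInf ((fun φ => φ xh) '' C) = 0 := by
  obtain ⟨hxF, hCne, rfl, -, hS, -⟩ := hadm
  have hnonneg : ∀ φ ∈ C, 0 ≤ φ xh := hxF
  refine le_antisymm ?_ (le_csInf (hCne.image _) (forall_mem_image.2 hnonneg))
  by_contra! hm
  have hmC : ∀ φ ∈ C, sInf ((fun φ => φ xh) '' C) ≤ φ xh := fun φ hφ =>
    csInf_le ⟨0, forall_mem_image.2 hnonneg⟩ (mem_image_of_mem _ hφ)
  have hSC : {φ | φ ∈ C ∧ φ xh ≠ 0} = C :=
    sep_eq_self_iff_mem_true.2 fun φ hφ => (hm.trans_le (hmC φ hφ)).ne'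
  rw [hSC] at hS
  exact hx.2 ((hS.resolve_left hCne.ne_empty).mem_interior_polarSet hm hmC)

/-- If `F` is weak-admissible at `xh ∈ F`, determined by `C`, and
`xh ∈ F \ int(F)`, then `inf_{φ ∈ C} φ(xh) = 0`. -/
theorem inf_eq_zero_of_boundary
    {E : Type*} [AddCommGroup E] [Module ℝ E] [TopologicalSpace E]
    [IsTopologicalAddGroup E] [ContinuousSMul ℝ E] [LocallyConvexSpace ℝ E] [T2Space E]
    (F : Set E) (hF : F.Nonempty) (C : Set (E → ℝ)) (D : (E → ℝ) → E →L[ℝ] ℝ) (xh : E)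
    (hadm : WeakAdmissibleAt F C D xh)
    (hx : xh ∈ F \ interior F) :
    sInf ((fun φ => φ xh) '' C) = 0 :=
  inf_eq_zero_of_boundary_general F C D xh hadm hx
end
end

section
/- Let Y be a real normed space and A ⊂ Y a nonempty closed convex cone with A ≠ Y (equivalently A* ≠ {0}), and let e ∈ Y. Then e ∈ int(A) if and only if inf { y*(e) : y* ∈ S_{Y*} ∩ A* } > 0. Consequently, int(A) ≠ ∅ if and only if 0 ∉ the weak-star closed convex hull of S_{Y*} ∩ A*. -/
open Topology Filter Set

noncomputable section

/-! By Hahn–Banach, a closed convex cone `A` is the intersection of the half-spaces `{φ ≥ 0}` with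
`φ ∈ S_{Y*} ∩ A*`, so the radius of the largest ball around `e` inside `A` is
`inf {φ e : φ ∈ S_{Y*} ∩ A*}`. The weak-star continuous functionals on `Y*` are the evaluations at
points of `Y`, so `0` can be separated from the weak-star closed convex hull of `S_{Y*} ∩ A*` exactly
when some `e` has this infimum positive. -/

lemma lt_csInf_iff_exists_lt_le {α : Type*} [ConditionallyCompleteLattice α] {s : Set α} {a : α}
    (hne : s.Nonempty) (hbdd : BddBelow s) : a < sInf s ↔ ∃ b > a, ∀ x ∈ s, b ≤ x :=
  ⟨fun h => ⟨sInf s, h, fun _ hx => csInf_le hbdd hx⟩,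
    fun ⟨_, hb, h⟩ => hb.trans_le (le_csInf hne h)⟩

section TopologicalVectorSpace

variable {E : Type*} [AddCommGroup E] [Module ℝ E] [TopologicalSpace E]

lemma zero_mem_of_isClosed_of_smul_mem [ContinuousSMul ℝ E] {A : Set E} (hne : A.Nonempty)
    (hcl : IsClosed A) (hcone : ∀ c : ℝ, 0 < c → ∀ x ∈ A, c • x ∈ A) : (0 : E) ∈ A := by
  obtain ⟨x, hx⟩ := hne
  have hlim : Tendsto (fun c : ℝ => c • x) (𝓝[>] 0) (𝓝 0) := by
    simpa using (tendsto_id.mono_left (nhdsWithin_le_nhds (a := (0 : ℝ)))).smul_const x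
  exact hcl.mem_of_tendsto hlim (eventually_nhdsWithin_of_forall fun c hc => hcone c hc x hx)

lemma exists_properCone_coe_eq [ContinuousSMul ℝ E] {A : Set E} (hne : A.Nonempty)
    (hcl : IsClosed A) (hconv : Convex ℝ A) (hcone : ∀ c : ℝ, 0 < c → ∀ x ∈ A, c • x ∈ A) :
    ∃ C : ProperCone ℝ E, (C : Set E) = A := by
  have h0 := zero_mem_of_isClosed_of_smul_mem hne hcl hcone
  refine ⟨{ carrier := A, zero_mem' := h0, isClosed' := hcl, add_mem' := ?_, smul_mem' := ?_ },
    rfl⟩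
  · intro x y hx hy
    have hmid := hconv hx hy (a := 1 / 2) (b := 1 / 2) (by norm_num) (by norm_num) (by norm_num)
    convert hcone 2 two_pos _ hmid using 1
    simp only [smul_add, smul_smul]
    norm_num
  · intro c x hx
    rcases eq_or_ne c 0 with rfl | hc
    · simpa using h0
    · exact hcone c (NNReal.coe_pos.2 (pos_iff_ne_zero.2 hc)) x hx

instance : LocallyConvexSpace ℝ (WeakDual ℝ E) := WeakBilin.locallyConvexSpace

lemma WeakDual.exists_eq_eval (f : WeakDual ℝ E →L[ℝ] ℝ) :
    ∃ e : E, ∀ ψ : WeakDual ℝ E, f ψ = ψ e := by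
  obtain ⟨e, rfl⟩ := LinearMap.dualEmbedding_surjective (topDualPairing ℝ E) f
  exact ⟨e, fun ψ => rfl⟩

lemma wcch_subset_setOf_le_apply {B : Set (E →L[ℝ] ℝ)} {e : E} {r : ℝ}
    (hB : ∀ φ ∈ B, r ≤ φ e) : wcch B ⊆ {ψ : WeakDual ℝ E | r ≤ ψ e} := by
  have hclosed : IsClosed {ψ : WeakDual ℝ E | r ≤ ψ e} :=
    isClosed_Ici.preimage (WeakDual.eval_continuous e)
  have hconvex : Convex ℝ {ψ : WeakDual ℝ E | r ≤ ψ e} :=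
    convex_halfSpace_ge (f := fun ψ : WeakDual ℝ E => ψ e) ⟨fun _ _ => rfl, fun _ _ => rfl⟩ r
  refine closure_minimal (convexHull_min ?_ hconvex) hclosed
  rintro _ ⟨φ, hφ, rfl⟩
  exact hB φ hφ

lemma toWD_zero_notMem_wcch_iff [IsTopologicalAddGroup E] [ContinuousSMul ℝ E]
    (B : Set (E →L[ℝ] ℝ)) :
    toWD (0 : E →L[ℝ] ℝ) ∉ wcch B ↔ ∃ e : E, ∃ r > 0, ∀ φ ∈ B, r ≤ φ e := by
  constructor
  · intro h0
    obtain ⟨f, u, hf0, hfB⟩ := geometric_hahn_banach_point_closed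
      (convex_convexHull ℝ _).closure isClosed_closure h0
    obtain ⟨e, hfe⟩ := WeakDual.exists_eq_eval f
    refine ⟨e, u, ?_, fun φ hφ => ?_⟩
    · rwa [show toWD (0 : E →L[ℝ] ℝ) = 0 from rfl, map_zero] at hf0
    · have := hfB (toWD φ) (subset_closure (subset_convexHull ℝ _ (mem_image_of_mem _ hφ)))
      exact (hfe _ ▸ this).le
  · rintro ⟨e, r, hr, hB⟩ h0
    exact (wcch_subset_setOf_le_apply hB h0 : r ≤ 0).not_gt hr

end TopologicalVectorSpace

section NormedSpace

variable {Y : Type*} [NormedAddCommGroup Y] [NormedSpace ℝ Y]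

def posDualConeSphere (A : Set Y) : Set (Y →L[ℝ] ℝ) := {φ | ‖φ‖ = 1 ∧ φ ∈ posDualCone A}

lemma exists_mem_posDualConeSphere_apply_neg (C : ProperCone ℝ Y) {z : Y} (hz : z ∉ C) :
    ∃ φ ∈ posDualConeSphere (C : Set Y), φ z < 0 := by
  obtain ⟨f, hfC, hfz⟩ := C.hyperplane_separation_point hz
  have hf : 0 < ‖f‖ := norm_pos_iff.2 fun h => by simp [h] at hfz
  refine ⟨‖f‖⁻¹ • f, ⟨?_, fun y hy => ?_⟩, ?_⟩
  · rw [norm_smul, norm_inv, norm_norm, inv_mul_cancel₀ hf.ne']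
  · exact smul_nonneg (inv_nonneg.2 hf.le) (hfC y hy)
  · exact smul_neg_of_pos_of_neg (inv_pos.2 hf) hfz

lemma posDualConeSphere_nonempty (C : ProperCone ℝ Y) (hC : (C : Set Y) ≠ univ) :
    (posDualConeSphere (C : Set Y)).Nonempty := by
  obtain ⟨z, hz⟩ := (ne_univ_iff_exists_notMem _).1 hC
  obtain ⟨φ, hφ, -⟩ := exists_mem_posDualConeSphere_apply_neg C hz
  exact ⟨φ, hφ⟩

lemma bddBelow_image_apply_posDualConeSphere (A : Set Y) (e : Y) :
    BddBelow ((fun φ : Y →L[ℝ] ℝ => φ e) '' posDualConeSphere A) := by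
  refine ⟨-‖e‖, ?_⟩
  rintro _ ⟨φ, ⟨hφ, -⟩, rfl⟩
  have := φ.le_opNorm e
  rw [hφ, one_mul, Real.norm_eq_abs] at this
  exact neg_le_of_abs_le this

lemma mul_norm_le_apply_of_ball_subset {A : Set Y} {φ : Y →L[ℝ] ℝ} (hφ : φ ∈ posDualCone A)
    {e : Y} {r : ℝ} (hr : 0 < r) (hball : Metric.ball e r ⊆ A) : r * ‖φ‖ ≤ φ e := by
  have hbound : ∀ u : Y, ‖u‖ < 1 → r * φ u ≤ φ e := by
    intro u hu
    have hmem : e - r • u ∈ Metric.ball e r := by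
      rw [Metric.mem_ball, dist_eq_norm, sub_sub_cancel_left, norm_neg, norm_smul,
        Real.norm_of_nonneg hr.le]
      exact mul_lt_of_lt_one_right hr hu
    have := hφ _ (hball hmem)
    rw [map_sub, map_smul, smul_eq_mul] at this
    linarith
  refine le_of_forall_lt fun c hc => ?_
  obtain ⟨u, hu, hcu⟩ := φ.exists_lt_apply_of_lt_opNorm ((div_lt_iff₀' hr).2 hc)
  rw [Real.norm_eq_abs, div_lt_iff₀' hr] at hcu
  have hneg := hbound (-u) (by rwa [norm_neg])
  rw [map_neg] at hneg
  rcases abs_cases (φ u) with ⟨habs, -⟩ | ⟨habs, -⟩ <;> rw [habs] at hcu <;> linarith [hbound u hu]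

lemma ball_subset_of_forall_le_apply (C : ProperCone ℝ Y) {e : Y} {r : ℝ}
    (h : ∀ φ ∈ posDualConeSphere (C : Set Y), r ≤ φ e) : Metric.ball e r ⊆ C := by
  intro w hw
  by_contra hwC
  obtain ⟨φ, hφ, hφw⟩ := exists_mem_posDualConeSphere_apply_neg C hwC
  have hdist : φ e - φ w ≤ ‖e - w‖ := by
    have := φ.le_opNorm (e - w)
    rw [hφ.1, one_mul, map_sub, Real.norm_eq_abs] at this
    exact (le_abs_self _).trans this
  rw [Metric.mem_ball, dist_comm, dist_eq_norm] at hw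
  linarith [h φ hφ]

lemma mem_interior_iff_exists_le_apply (C : ProperCone ℝ Y) {e : Y} :
    e ∈ interior (C : Set Y) ↔ ∃ r > 0, ∀ φ ∈ posDualConeSphere (C : Set Y), r ≤ φ e := by
  rw [mem_interior_iff_mem_nhds, Metric.mem_nhds_iff]
  constructor
  · rintro ⟨r, hr, hball⟩
    refine ⟨r, hr, fun φ hφ => ?_⟩
    simpa [hφ.1] using mul_norm_le_apply_of_ball_subset hφ.2 hr hball
  · rintro ⟨r, hr, h⟩
    exact ⟨r, hr, ball_subset_of_forall_le_apply C h⟩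

end NormedSpace

/-- For a nonempty closed convex cone `A ≠ Y` in a real normed space `Y`:
`e ∈ int(A)` iff `inf {y*(e) : y* ∈ S_{Y*} ∩ A*} > 0`; consequently `int(A) ≠ ∅` iff
`0` is not in the weak-star closed convex hull of `S_{Y*} ∩ A*`. -/
theorem interior_cone_characterization
    {Y : Type*} [NormedAddCommGroup Y] [NormedSpace ℝ Y]
    (A : Set Y) (hne : A.Nonempty) (hcl : IsClosed A) (hconv : Convex ℝ A)
    (hcone : ∀ c : ℝ, 0 < c → ∀ x ∈ A, c • x ∈ A) (hA : A ≠ Set.univ) :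
    (∀ e : Y, e ∈ interior A ↔
      0 < sInf ((fun φ : Y →L[ℝ] ℝ => φ e) '' {φ | ‖φ‖ = 1 ∧ φ ∈ posDualCone A})) ∧
    ((interior A).Nonempty ↔
      toWD (0 : Y →L[ℝ] ℝ) ∉ wcch {φ : Y →L[ℝ] ℝ | ‖φ‖ = 1 ∧ φ ∈ posDualCone A}) := by
  obtain ⟨C, rfl⟩ := exists_properCone_coe_eq hne hcl hconv hcone
  refine ⟨fun e => (mem_interior_iff_exists_le_apply C).trans ?_, ?_⟩
  · refine ((lt_csInf_iff_exists_lt_le ((posDualConeSphere_nonempty C hA).image _)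
      (bddBelow_image_apply_posDualConeSphere _ e)).trans ?_).symm
    simp only [forall_mem_image]
  · rw [toWD_zero_notMem_wcch_iff]
    exact exists_congr fun e => mem_interior_iff_exists_le_apply C
end
end

section
/- Let Y be a real normed space and K a nonempty closed convex subset of Y. Then the interior of the recession cone R_K is nonempty if and only if either K = Y or 0 ∉ the weak-star closed convex hull of S_{Y*} ∩ (−bar(K)). -/
open Topology Filter Set

noncomputable section

/-!
Separation by closed half-spaces gives `R_K = {w | 0 ≤ φ w for all φ ∈ S_{Y*} ∩ (−bar K)}`:
a direction that leaves `K` is detected by a functional bounded above on `K`. For a cone cut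
out by a set `B` of unit functionals, `v` is an interior point exactly when `φ v` is bounded
away from `0` on `B`. Since the weak-star continuous functionals on `Y*` are the evaluations at
points of `Y`, such a `v` exists exactly when `0` can be separated from the weak-star closed
convex hull of `B`. The case `K = Y` needs nothing more, as then `R_K = Y`.
-/

section WeakStarSeparation

variable {E : Type*} [AddCommGroup E] [Module ℝ E] [TopologicalSpace E]

theorem zero_notMem_wcch_iff (B : Set (E →L[ℝ] ℝ)) :
    toWD (0 : E →L[ℝ] ℝ) ∉ wcch B ↔ ∃ v : E, ∃ r > 0, ∀ φ ∈ B, r ≤ φ v := by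
  -- instance search does not see through the definition `WeakDual ℝ E := WeakBilin _`
  have : LocallyConvexSpace ℝ (WeakDual ℝ E) := WeakBilin.locallyConvexSpace
  constructor
  · intro h0
    obtain ⟨f, u, hf, hu⟩ := geometric_hahn_banach_closed_point
      (convex_convexHull ℝ _).closure isClosed_closure h0
    obtain ⟨y, rfl⟩ := LinearMap.dualEmbedding_surjective (topDualPairing ℝ E) f
    refine ⟨-y, -u, neg_pos.mpr hu, fun φ hφ => ?_⟩
    have hφy : φ y < u :=
      hf _ (subset_closure (subset_convexHull ℝ _ (mem_image_of_mem toWD hφ)))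
    rw [map_neg]
    linarith
  · rintro ⟨v, r, hr, hv⟩ h0
    let S : Set (WeakDual ℝ E) := {ψ | r ≤ ψ v}
    have hS : wcch B ⊆ S := by
      refine closure_minimal (convexHull_min ?_ ?_) ?_
      · rintro _ ⟨φ, hφ, rfl⟩
        exact hv φ hφ
      · exact convex_halfSpace_ge (WeakBilin.eval (topDualPairing ℝ E) v).isLinear r
      · exact isClosed_le continuous_const (WeakBilin.eval_continuous _ v)
    have : r ≤ 0 := hS h0
    linarith

end WeakStarSeparation

section NormedSpace

variable {Y : Type*} [NormedAddCommGroup Y] [NormedSpace ℝ Y]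

theorem mul_norm_le_apply_of_closedBall_subset {φ : Y →L[ℝ] ℝ} {v : Y} {r : ℝ} (hr : 0 < r)
    (h : Metric.closedBall v r ⊆ {z | 0 ≤ φ z}) : r * ‖φ‖ ≤ φ v := by
  have hv : 0 ≤ φ v := h (Metric.mem_closedBall_self hr.le)
  have hbound : ‖φ‖ ≤ φ v / r := by
    refine φ.opNorm_le_of_unit_norm (div_nonneg hv hr.le) fun u hu => ?_
    have hmem : ∀ s : ℝ, |s| = r → 0 ≤ φ v + s * φ u := fun s hs => by
      have := h (show v + s • u ∈ Metric.closedBall v r by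
        simp [dist_eq_norm, norm_smul, hu, hs])
      simpa using this
    have h₁ := hmem r (abs_of_pos hr)
    have h₂ := hmem (-r) (by rw [abs_neg, abs_of_pos hr])
    rw [Real.norm_eq_abs, le_div_iff₀ hr]
    rcases abs_cases (φ u) with ⟨habs, -⟩ | ⟨habs, -⟩ <;> rw [habs] <;> linarith
  rwa [le_div_iff₀ hr, mul_comm] at hbound

theorem interior_setOf_forall_nonneg_nonempty_iff {B : Set (Y →L[ℝ] ℝ)}
    (hB : ∀ φ ∈ B, ‖φ‖ = 1) :
    (interior {w | ∀ φ ∈ B, 0 ≤ φ w}).Nonempty ↔ ∃ v : Y, ∃ r > 0, ∀ φ ∈ B, r ≤ φ v := by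
  constructor
  · rintro ⟨v, hv⟩
    obtain ⟨r, hr, hball⟩ :=
      Metric.nhds_basis_closedBall.mem_iff.mp (mem_interior_iff_mem_nhds.mp hv)
    refine ⟨v, r, hr, fun φ hφ => ?_⟩
    simpa [hB φ hφ] using
      mul_norm_le_apply_of_closedBall_subset hr fun z hz => hball hz φ hφ
  · rintro ⟨v, r, hr, hv⟩
    refine ⟨v, mem_interior.mpr ⟨Metric.ball v r, fun w hw φ hφ => ?_, Metric.isOpen_ball,
      Metric.mem_ball_self hr⟩⟩
    have hdev : |φ (w - v)| ≤ ‖w - v‖ := by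
      simpa [hB φ hφ] using φ.le_opNorm (w - v)
    rw [Metric.mem_ball, dist_eq_norm] at hw
    have : φ w = φ v + φ (w - v) := by simp
    linarith [hv φ hφ, neg_abs_le (φ (w - v))]

theorem smul_mem_barCone {K : Set Y} {φ : Y →L[ℝ] ℝ} (hφ : φ ∈ barCone K) {c : ℝ} (hc : 0 ≤ c) :
    c • φ ∈ barCone K := by
  obtain ⟨M, hM⟩ := hφ
  refine ⟨c * M, ?_⟩
  rintro _ ⟨y, hy, rfl⟩
  exact mul_le_mul_of_nonneg_left (hM ⟨y, hy, rfl⟩) hc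

theorem apply_nonpos_of_mem_barCone_of_mem_recCone {K : Set Y} (hne : K.Nonempty)
    {ψ : Y →L[ℝ] ℝ} (hψ : ψ ∈ barCone K) {z : Y} (hz : z ∈ recCone K) : ψ z ≤ 0 := by
  obtain ⟨M, hM⟩ := hψ
  obtain ⟨x, hx⟩ := hne
  by_contra! hpos
  have hle : ψ (x + ((M - ψ x + 1) / ψ z) • z) ≤ M :=
    hM ⟨_, hz _ (div_pos (by linarith [hM ⟨x, hx, rfl⟩]) hpos) x hx, rfl⟩
  rw [map_add, map_smul, smul_eq_mul, div_mul_cancel₀ _ hpos.ne'] at hle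
  linarith

theorem mem_recCone_of_forall_neg_mem_barCone {K : Set Y} (hcl : IsClosed K)
    (hconv : Convex ℝ K) {w : Y} (hw : ∀ φ : Y →L[ℝ] ℝ, -φ ∈ barCone K → 0 ≤ φ w) :
    w ∈ recCone K := by
  intro l hl x hx
  by_contra hout
  obtain ⟨f, u, hfK, hfu⟩ := geometric_hahn_banach_closed_point hconv hcl hout
  have hf : 0 ≤ -f w := hw (-f) (by
    rw [neg_neg]
    exact ⟨u, by rintro _ ⟨y, hy, rfl⟩; exact (hfK y hy).le⟩)
  rw [map_add, map_smul, smul_eq_mul] at hfu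
  nlinarith [hfK x hx]

theorem recCone_eq_setOf_forall_nonneg {K : Set Y} (hne : K.Nonempty) (hcl : IsClosed K)
    (hconv : Convex ℝ K) :
    recCone K = {w | ∀ φ ∈ {φ : Y →L[ℝ] ℝ | ‖φ‖ = 1 ∧ -φ ∈ barCone K}, 0 ≤ φ w} := by
  ext w
  refine ⟨fun hw φ hφ => ?_, fun hw => mem_recCone_of_forall_neg_mem_barCone hcl hconv ?_⟩
  · simpa using apply_nonpos_of_mem_barCone_of_mem_recCone hne hφ.2 hw
  · intro φ hφ
    rcases eq_or_ne φ 0 with rfl | hφ0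
    · simp
    have hunit : ‖φ‖⁻¹ • φ ∈ {φ : Y →L[ℝ] ℝ | ‖φ‖ = 1 ∧ -φ ∈ barCone K} :=
      ⟨by simp [norm_smul, norm_ne_zero_iff.mpr hφ0],
        by simpa using smul_mem_barCone hφ (inv_nonneg.mpr (norm_nonneg φ))⟩
    have := hw _ hunit
    rw [smul_apply, smul_eq_mul] at this
    exact (mul_nonneg_iff_of_pos_left (inv_pos.mpr (norm_pos_iff.mpr hφ0))).mp this

end NormedSpace

/-- For a nonempty closed convex subset `K` of a real normed space `Y`,
the recession cone `R_K` has nonempty interior iff either `K = Y` or `0` is not in the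
weak-star closed convex hull of `S_{Y*} ∩ (−bar(K))`. -/
theorem interior_recession_cone_nonempty_iff
    {Y : Type*} [NormedAddCommGroup Y] [NormedSpace ℝ Y]
    (K : Set Y) (hne : K.Nonempty) (hcl : IsClosed K) (hconv : Convex ℝ K) :
    (interior (recCone K)).Nonempty ↔
      (K = Set.univ ∨
        toWD (0 : Y →L[ℝ] ℝ) ∉ wcch {φ : Y →L[ℝ] ℝ | ‖φ‖ = 1 ∧ -φ ∈ barCone K}) := by
  have key : (interior (recCone K)).Nonempty ↔
      toWD (0 : Y →L[ℝ] ℝ) ∉ wcch {φ : Y →L[ℝ] ℝ | ‖φ‖ = 1 ∧ -φ ∈ barCone K} := by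
    rw [recCone_eq_setOf_forall_nonneg hne hcl hconv, zero_notMem_wcch_iff]
    exact interior_setOf_forall_nonneg_nonempty_iff fun φ hφ => hφ.1
  refine ⟨fun h => Or.inr (key.mp h), ?_⟩
  rintro (rfl | h)
  · have : recCone (univ : Set Y) = univ := eq_univ_of_forall fun _ _ _ _ _ => mem_univ _
    simp [this]
  · exact key.mpr h
end
end

section
/- Let Y be a normed vector space and A a nonempty closed convex subset with bar(A) ≠ {0} (equivalently A ≠ Y). Set C := { y* − inf_{x∈A} y*(x) : y* ∈ S_{Y*} ∩ (−bar(A)) }, a family of real-valued affine continuous functions on Y. Then A = [C]^× = { y ∈ Y : y*(y) − inf_{x∈A} y*(x) ≥ 0 for all y* ∈ S_{Y*} ∩ (−bar(A)) }; in particular A is weak-admissible at each of its points, determined by C. Moreover, if 0 ∉ the weak-star closed convex hull of S_{Y*} ∩ (−bar(A)) then A is admissible at each of its points, determined by C; this holds in particular whenever int(R_A) ≠ ∅, and if A ≠ Y is a closed convex cone with int(A) ≠ ∅ then A = [S_{Y*} ∩ A*]^× is admissible determined by C = S_{Y*} ∩ A*. -/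
/-! Every member of `detFam A` is an affine map `ψ - inf_A ψ` with `‖ψ‖ = 1`, so the family is
equi-Gateaux differentiable with zero remainder and uniformly `1`-Lipschitz, and its
differentials lie in the dual unit ball, which is weak-star compact (Banach–Alaoglu).
`A = [C]^×` is the Hahn–Banach separation of a point from a closed convex set.
If a closed ball `B(v, r)` lies in the recession cone `R_A`, every `ψ` bounded below on `A` is
nonnegative on `R_A`, hence `r ‖ψ‖ ≤ ψ v`: the weak-star closed half-space `{ξ | r ≤ ξ v}`
contains all differentials but not `0`. For a convex cone, `A ⊆ R_A`, which turns `−bar(A)`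
into `A*` and `inf_A ψ` into `0`. -/

open Topology Filter Set

noncomputable section

section Stmt5

variable {Y : Type*} [NormedAddCommGroup Y] [NormedSpace ℝ Y]

/-- The determining family `C = {y* − inf_{x∈A} y*(x) : y* ∈ S_{Y*} ∩ (−bar(A))}`. -/
def detFam (A : Set Y) : Set (Y → ℝ) :=
  (fun φ : Y →L[ℝ] ℝ => fun y => φ y - sInf (φ '' A)) ''
    {φ : Y →L[ℝ] ℝ | ‖φ‖ = 1 ∧ -φ ∈ barCone A}

/-- The determining family `C = S_{Y*} ∩ A*` for a closed convex cone `A`. -/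
def coneFam (A : Set Y) : Set (Y → ℝ) :=
  (fun φ : Y →L[ℝ] ℝ => (φ : Y → ℝ)) '' {φ : Y →L[ℝ] ℝ | ‖φ‖ = 1 ∧ φ ∈ posDualCone A}

section

variable {E : Type*} [AddCommGroup E] [Module ℝ E] [TopologicalSpace E]

open Classical in
def linearPart (f : E → ℝ) : E →L[ℝ] ℝ :=
  if h : ∃ ψ : E →L[ℝ] ℝ, ∀ y, f y = ψ y + f 0 then h.choose else 0

theorem linearPart_sub_const (ψ : E →L[ℝ] ℝ) (c : ℝ) : linearPart (fun y => ψ y - c) = ψ := by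
  have h : ∃ ψ' : E →L[ℝ] ℝ, ∀ y, ψ y - c = ψ' y + (ψ 0 - c) :=
    ⟨ψ, fun y => by rw [map_zero]; ring⟩
  rw [linearPart, dif_pos h]
  ext y
  linarith [h.choose_spec y, map_zero ψ]

theorem equiGateauxAt_of_affine {C : Set (E → ℝ)} {D : (E → ℝ) → E →L[ℝ] ℝ} {x : E}
    (hC : ∀ φ ∈ C, ∀ (v : E) (t : ℝ), φ (x + t • v) = φ x + t * D φ v) :
    EquiGateauxAt C D x := by
  have hrem : ∀ φ ∈ C, ∀ (v : E) (t : ℝ), (φ (x + t • v) - φ x - t * D φ v) / t = 0 :=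
    fun φ hφ v t => by rw [hC φ hφ v t]; ring
  refine ⟨fun φ hφ v => ?_, fun v ε hε => ⟨1, one_pos, fun t _ _ φ hφ => ?_⟩⟩
  · simp only [hrem φ hφ v, tendsto_const_nhds]
  · rw [hrem φ hφ v t, abs_zero]
    exact hε.le

theorem wcch_subset_setOf_le {B : Set (E →L[ℝ] ℝ)} {v : E} {c : ℝ}
    (hB : ∀ ψ ∈ B, c ≤ ψ v) : wcch B ⊆ {ξ : WeakDual ℝ E | c ≤ ξ v} := by
  refine closure_minimal (convexHull_min ?_ ?_)
    (isClosed_le continuous_const (WeakDual.eval_continuous v))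
  · rintro _ ⟨ψ, hψ, rfl⟩
    exact hB ψ hψ
  · exact convex_halfSpace_ge (f := fun ξ : WeakDual ℝ E => ξ v)
      ⟨fun _ _ => rfl, fun _ _ => rfl⟩ c

end

theorem equiLscAt_of_lipschitzWith {X : Type*} [PseudoMetricSpace X] {C : Set (X → ℝ)}
    {K : NNReal} (hC : ∀ φ ∈ C, LipschitzWith K φ) (x : X) : EquiLscAt C x := by
  intro ε hε
  refine ⟨Metric.ball x (ε / (K + 1)), Metric.ball_mem_nhds x (by positivity),
    fun y hy φ hφ => ?_⟩
  have hdist : dist (φ y) (φ x) < ε := calc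
    dist (φ y) (φ x) ≤ K * dist y x := (hC φ hφ).dist_le_mul y x
    _ ≤ (K + 1) * dist y x := by gcongr; linarith
    _ < ε := by rw [← lt_div_iff₀' (by positivity)]; exact hy
  linarith [neg_abs_le (φ y - φ x), Real.dist_eq (φ y) (φ x)]

theorem isCompact_wcch_of_norm_le {B : Set (Y →L[ℝ] ℝ)} {r : ℝ} (hB : ∀ ψ ∈ B, ‖ψ‖ ≤ r) :
    IsCompact (wcch B) := by
  have hball : IsClosed (WeakDual.toStrongDual ⁻¹' Metric.closedBall (0 : StrongDual ℝ Y) r) :=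
    WeakDual.isClosed_closedBall 0 r
  refine (WeakDual.isCompact_closedBall 0 r).of_isClosed_subset isClosed_closure
    (closure_minimal (convexHull_min ?_ ?_) hball)
  · rintro _ ⟨ψ, hψ, rfl⟩
    exact (mem_closedBall_zero_iff.2 (hB ψ hψ) : ψ ∈ Metric.closedBall 0 r)
  · exact (convex_closedBall _ _).linear_preimage
      (WeakDual.toStrongDual (𝕜 := ℝ) (E := Y)).toLinearMap

theorem neg_mem_barCone_iff {A : Set Y} {ψ : Y →L[ℝ] ℝ} :
    -ψ ∈ barCone A ↔ BddBelow (ψ '' A) := by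
  change BddAbove ((-ψ) '' A) ↔ _
  rw [← bddAbove_neg, ← Set.image_neg_eq_neg, Set.image_image]
  rfl

def sphereNegBarCone (A : Set Y) : Set (Y →L[ℝ] ℝ) := {φ | ‖φ‖ = 1 ∧ -φ ∈ barCone A}

theorem inv_norm_smul_mem_sphereNegBarCone {A : Set Y} {f : Y →L[ℝ] ℝ} (hf : f ≠ 0)
    (hbdd : BddBelow (f '' A)) : ‖f‖⁻¹ • f ∈ sphereNegBarCone A := by
  refine ⟨norm_smul_inv_norm hf, neg_mem_barCone_iff.2 ?_⟩
  obtain ⟨m, hm⟩ := hbdd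
  refine ⟨‖f‖⁻¹ * m, ?_⟩
  rintro _ ⟨x, hx, rfl⟩
  exact mul_le_mul_of_nonneg_left (hm (mem_image_of_mem f hx)) (by positivity)

theorem detFam_nonempty {A : Set Y} (hbar : barCone A ≠ {0}) : (detFam A).Nonempty := by
  obtain ⟨g, hg, hg0⟩ : ∃ g ∈ barCone A, g ≠ 0 := by
    by_contra! h
    refine hbar (Set.eq_singleton_iff_unique_mem.2 ⟨⟨0, ?_⟩, h⟩)
    rintro _ ⟨x, -, rfl⟩
    simp
  have hbdd : BddBelow ((-g) '' A) := neg_mem_barCone_iff.1 (by rwa [neg_neg])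
  exact ⟨_, mem_image_of_mem _ (inv_norm_smul_mem_sphereNegBarCone (neg_ne_zero.2 hg0) hbdd)⟩

theorem eq_polarSet_detFam {A : Set Y} (hne : A.Nonempty) (hcl : IsClosed A)
    (hconv : Convex ℝ A) : A = polarSet (detFam A) := by
  refine Subset.antisymm ?_ fun y hy => ?_
  · rintro y hy _ ⟨ψ, hψ, rfl⟩
    exact sub_nonneg.2 (csInf_le (neg_mem_barCone_iff.1 hψ.2) (mem_image_of_mem ψ hy))
  by_contra hyA
  obtain ⟨f, u, hfy, hfA⟩ := geometric_hahn_banach_point_closed hconv hcl hyA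
  have hf : f ≠ 0 := by
    rintro rfl
    obtain ⟨x, hx⟩ := hne
    simp only [zero_apply] at hfy hfA
    linarith [hfA x hx]
  have hbdd : BddBelow (f '' A) := ⟨u, by rintro _ ⟨x, hx, rfl⟩; exact (hfA x hx).le⟩
  set ψ := ‖f‖⁻¹ • f
  have hsep : ψ y < ‖f‖⁻¹ * u := mul_lt_mul_of_pos_left hfy (by positivity)
  have hinf : ‖f‖⁻¹ * u ≤ sInf (ψ '' A) := le_csInf (hne.image ψ) <| by
    rintro _ ⟨x, hx, rfl⟩
    exact mul_le_mul_of_nonneg_left (hfA x hx).le (by positivity)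
  have hnonneg := hy _ ⟨ψ, inv_norm_smul_mem_sphereNegBarCone hf hbdd, rfl⟩
  linarith

theorem linearPart_image_detFam (A : Set Y) : linearPart '' detFam A = sphereNegBarCone A := by
  rw [detFam, image_image]
  simp only [linearPart_sub_const, image_id']
  rfl

theorem detFam_apply_add_smul {A : Set Y} {φ : Y → ℝ} (hφ : φ ∈ detFam A) (x v : Y) (t : ℝ) :
    φ (x + t • v) = φ x + t * linearPart φ v := by
  obtain ⟨ψ, -, rfl⟩ := hφ
  rw [linearPart_sub_const]
  simp only [map_add, map_smul, smul_eq_mul]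
  ring

theorem lipschitzWith_one_of_mem_detFam {A : Set Y} {φ : Y → ℝ} (hφ : φ ∈ detFam A) :
    LipschitzWith 1 φ := by
  obtain ⟨ψ, hψ, rfl⟩ := hφ
  refine LipschitzWith.of_dist_le_mul fun a b => ?_
  rw [dist_sub_right, NNReal.coe_one, ← hψ.1]
  exact ψ.lipschitz.dist_le_mul a b

theorem weakAdmissibleAt_detFam {A : Set Y} (hne : A.Nonempty) (hcl : IsClosed A)
    (hconv : Convex ℝ A) (hbar : barCone A ≠ {0}) {x : Y} (hx : x ∈ A) :
    WeakAdmissibleAt A (detFam A) linearPart x := by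
  refine ⟨hx, detFam_nonempty hbar, eq_polarSet_detFam hne hcl hconv,
    equiGateauxAt_of_affine fun φ hφ => detFam_apply_add_smul hφ x,
    Or.inr (equiLscAt_of_lipschitzWith (fun φ hφ => lipschitzWith_one_of_mem_detFam hφ.1) x),
    isCompact_wcch_of_norm_le (r := 1) ?_⟩
  rw [linearPart_image_detFam]
  exact fun ψ hψ => hψ.1.le

theorem admissibleAt_detFam {A : Set Y} (hne : A.Nonempty) (hcl : IsClosed A)
    (hconv : Convex ℝ A) (hbar : barCone A ≠ {0})
    (h0 : toWD (0 : Y →L[ℝ] ℝ) ∉ wcch (sphereNegBarCone A)) {x : Y} (hx : x ∈ A) :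
    AdmissibleAt A (detFam A) linearPart x := by
  obtain ⟨-, hCne, hpolar, hgat, -, -⟩ := weakAdmissibleAt_detFam hne hcl hconv hbar hx
  refine ⟨hx, hCne, hpolar, hgat,
    ⟨1, 1, one_pos, fun φ hφ => (lipschitzWith_one_of_mem_detFam hφ).lipschitzOnWith⟩, ?_⟩
  rwa [linearPart_image_detFam]

theorem apply_nonneg_of_mem_recCone {A : Set Y} (hne : A.Nonempty) {ψ : Y →L[ℝ] ℝ}
    (hψ : BddBelow (ψ '' A)) {w : Y} (hw : w ∈ recCone A) : 0 ≤ ψ w := by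
  obtain ⟨m, hm⟩ := hψ
  obtain ⟨x, hx⟩ := hne
  have hmx : m ≤ ψ x := hm (mem_image_of_mem ψ hx)
  by_contra! hneg
  -- chosen so that `ψ (x + l • w) = m - 1`
  set l := (ψ x - m + 1) / -ψ w
  have hl : 0 < l := div_pos (by linarith) (neg_pos.2 hneg)
  have hlw : l * ψ w = -(ψ x - m + 1) := by
    have := hneg.ne
    simp only [l]
    field_simp
  have := hm (mem_image_of_mem ψ (hw l hl x hx))
  rw [map_add, map_smul, smul_eq_mul] at this
  linarith

theorem mul_norm_le_apply_of_closedBall_subset_recCone {A : Set Y} (hne : A.Nonempty)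
    {ψ : Y →L[ℝ] ℝ} (hψ : BddBelow (ψ '' A)) {v : Y} {r : ℝ} (hr : 0 < r)
    (hball : Metric.closedBall v r ⊆ recCone A) : r * ‖ψ‖ ≤ ψ v := by
  have hshift : ∀ z : Y, ‖z‖ ≤ r → 0 ≤ ψ v + ψ z := fun z hz => by
    rw [← map_add]
    refine apply_nonneg_of_mem_recCone hne hψ (hball ?_)
    rwa [Metric.mem_closedBall, dist_eq_norm, add_sub_cancel_left]
  have hbound : ∀ z ∈ Metric.closedBall (0 : Y) r, ‖ψ z‖ ≤ ψ v := fun z hz => by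
    rw [mem_closedBall_zero_iff] at hz
    have := hshift (-z) (by rwa [norm_neg])
    rw [map_neg] at this
    exact abs_le.2 ⟨by linarith [hshift z hz], by linarith⟩
  exact (le_div_iff₀' hr).1 (ψ.opNorm_bound_of_ball_bound hr _ hbound)

theorem zero_notMem_wcch_of_interior_recCone_nonempty {A : Set Y} (hne : A.Nonempty)
    (hint : (interior (recCone A)).Nonempty) :
    toWD (0 : Y →L[ℝ] ℝ) ∉ wcch (sphereNegBarCone A) := by
  obtain ⟨v, hv⟩ := hint
  obtain ⟨r, hr, hball⟩ :=
    Metric.nhds_basis_closedBall.mem_iff.1 (mem_interior_iff_mem_nhds.1 hv)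
  intro h0
  refine hr.not_ge (wcch_subset_setOf_le (v := v) (fun ψ hψ => ?_) h0)
  simpa [hψ.1] using
    mul_norm_le_apply_of_closedBall_subset_recCone hne (neg_mem_barCone_iff.1 hψ.2) hr hball

section Cone

variable {A : Set Y} (hcone : ∀ c : ℝ, 0 < c → ∀ x ∈ A, c • x ∈ A)
include hcone

theorem subset_recCone_of_smul_mem (hconv : Convex ℝ A) : A ⊆ recCone A := by
  intro w hw l hl x hx
  have hmid := hconv hx (hcone l hl w hw) (by norm_num : (0 : ℝ) ≤ 1 / 2)
    (by norm_num : (0 : ℝ) ≤ 1 / 2) (by norm_num)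
  convert hcone 2 two_pos _ hmid using 1
  rw [smul_add, smul_smul, smul_smul]
  norm_num

theorem zero_mem_of_smul_mem (hne : A.Nonempty) (hcl : IsClosed A) : (0 : Y) ∈ A := by
  obtain ⟨x, hx⟩ := hne
  have htend : Tendsto (fun c : ℝ => c • x) (𝓝[>] 0) (𝓝 0) := by
    simpa using (tendsto_id.smul_const x).mono_left (nhdsWithin_le_nhds (a := (0 : ℝ)))
  exact hcl.mem_of_tendsto htend (eventually_nhdsWithin_of_forall fun c hc => hcone c hc x hx)

theorem neg_mem_barCone_iff_mem_posDualCone (hne : A.Nonempty) (hconv : Convex ℝ A)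
    {ψ : Y →L[ℝ] ℝ} : -ψ ∈ barCone A ↔ ψ ∈ posDualCone A := by
  refine ⟨fun h y hy => ?_, fun h => neg_mem_barCone_iff.2 ⟨0, ?_⟩⟩
  · exact apply_nonneg_of_mem_recCone hne (neg_mem_barCone_iff.1 h)
      (subset_recCone_of_smul_mem hcone hconv hy)
  · rintro _ ⟨y, hy, rfl⟩
    exact h y hy

theorem detFam_eq_coneFam (hne : A.Nonempty) (hcl : IsClosed A) (hconv : Convex ℝ A) :
    detFam A = coneFam A := by
  have h0 := zero_mem_of_smul_mem hcone hne hcl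
  have hsInf : ∀ ψ ∈ posDualCone A, sInf (ψ '' A) = 0 := fun ψ hψ =>
    IsLeast.csInf_eq ⟨⟨0, h0, map_zero ψ⟩, by rintro _ ⟨y, hy, rfl⟩; exact hψ y hy⟩
  simp only [detFam, coneFam, neg_mem_barCone_iff_mem_posDualCone hcone hne hconv]
  refine image_congr fun ψ hψ => ?_
  simp only [hsInf ψ hψ.2, sub_zero]

end Cone

/-- A nonempty closed convex set `A` with `bar(A) ≠ {0}` satisfies
`A = [C]^×` for `C = {y* − inf_A y* : y* ∈ S_{Y*} ∩ (−bar(A))}` and is weak-admissible at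
each of its points, determined by `C`; it is admissible whenever
`0 ∉ w*-closed convex hull of S_{Y*} ∩ (−bar(A))`, in particular whenever `int(R_A) ≠ ∅`;
and a closed convex cone `A ≠ Y` with `int(A) ≠ ∅` satisfies `A = [S_{Y*} ∩ A*]^×` and is
admissible determined by `S_{Y*} ∩ A*`. -/
theorem closed_convex_weak_admissible
    (A : Set Y) (hne : A.Nonempty) (hcl : IsClosed A) (hconv : Convex ℝ A)
    (hbar : barCone A ≠ {0}) :
    (A = polarSet (detFam A)) ∧
    (∃ D : (Y → ℝ) → Y →L[ℝ] ℝ, ∀ xh ∈ A, WeakAdmissibleAt A (detFam A) D xh) ∧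
    (toWD (0 : Y →L[ℝ] ℝ) ∉ wcch {φ : Y →L[ℝ] ℝ | ‖φ‖ = 1 ∧ -φ ∈ barCone A} →
      ∃ D : (Y → ℝ) → Y →L[ℝ] ℝ, ∀ xh ∈ A, AdmissibleAt A (detFam A) D xh) ∧
    ((interior (recCone A)).Nonempty →
      ∃ D : (Y → ℝ) → Y →L[ℝ] ℝ, ∀ xh ∈ A, AdmissibleAt A (detFam A) D xh) ∧
    ((∀ c : ℝ, 0 < c → ∀ x ∈ A, c • x ∈ A) → (interior A).Nonempty →
      (A = polarSet (coneFam A)) ∧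
      ∃ D : (Y → ℝ) → Y →L[ℝ] ℝ, ∀ xh ∈ A, AdmissibleAt A (coneFam A) D xh) := by
  have hadm : toWD (0 : Y →L[ℝ] ℝ) ∉ wcch (sphereNegBarCone A) →
      ∀ x ∈ A, AdmissibleAt A (detFam A) linearPart x :=
    fun h0 _ => admissibleAt_detFam hne hcl hconv hbar h0
  refine ⟨eq_polarSet_detFam hne hcl hconv,
    ⟨linearPart, fun _ => weakAdmissibleAt_detFam hne hcl hconv hbar⟩,
    fun h0 => ⟨linearPart, hadm h0⟩,
    fun hrec => ⟨linearPart, hadm (zero_notMem_wcch_of_interior_recCone_nonempty hne hrec)⟩,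
    fun hcone hint => ?_⟩
  have hrec : (interior (recCone A)).Nonempty :=
    hint.mono (interior_mono (subset_recCone_of_smul_mem hcone hconv))
  rw [← detFam_eq_coneFam hcone hne hcl hconv]
  exact ⟨eq_polarSet_detFam hne hcl hconv,
    linearPart, hadm (zero_notMem_wcch_of_interior_recCone_nonempty hne hrec)⟩

end Stmt5
end
end

section
/- Let E be a Hausdorff locally convex topological vector space and x̂ ∈ [C]^× for some set C of real-valued functions on E, each Gateaux differentiable at x̂, such that the weak-star closed convex hull of { d_Gφ(x̂) : φ ∈ C } is weak-star compact in E*. Then T_C(x̂) ≠ ∅ if and only if inf_{φ ∈ C} φ(x̂) = 0. -/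
/-!
`T_C(x̂)` is the intersection of the decreasing sequence of weak-star closed convex hulls of the
differentials of the `1/n`-active constraints. Such a hull is nonempty exactly when some constraint
is `1/n`-active, and all of them lie in the compact hull of `{d_Gφ(x̂) : φ ∈ C}`, so by Cantor's
intersection theorem `T_C(x̂) ≠ ∅` iff every `1/n`-active set is nonempty, i.e. iff
`inf_{φ ∈ C} φ(x̂) = 0`.
-/

open Topology Filter Set

noncomputable section

theorem sInf_image_eq_zero_iff {α : Type*} {f : α → ℝ} {s : Set α} (hs : s.Nonempty)
    (hf : ∀ a ∈ s, 0 ≤ f a) :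
    sInf (f '' s) = 0 ↔ ∀ n : ℕ, 1 ≤ n → ∃ a ∈ s, f a ≤ 1 / n := by
  have hlb : ∀ y ∈ f '' s, 0 ≤ y := by rintro _ ⟨a, ha, rfl⟩; exact hf a ha
  have hbdd : BddBelow (f '' s) := ⟨0, hlb⟩
  constructor
  · intro h n hn
    have hlt : sInf (f '' s) < 1 / n := h ▸ by positivity
    obtain ⟨_, ⟨a, ha, rfl⟩, hfa⟩ := (csInf_lt_iff hbdd (hs.image f)).1 hlt
    exact ⟨a, ha, hfa.le⟩
  · intro h
    refine le_antisymm ?_ (le_csInf (hs.image f) hlb)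
    by_contra! hpos
    obtain ⟨n, hn⟩ := exists_nat_one_div_lt hpos
    obtain ⟨a, ha, hfa⟩ := h (n + 1) (Nat.le_add_left 1 n)
    have : sInf (f '' s) ≤ f a := csInf_le hbdd ⟨a, ha, rfl⟩
    push_cast at hfa
    linarith

def epsActive {X : Type*} (C : Set (X → ℝ)) (x : X) (ε : ℝ) : Set (X → ℝ) :=
  {φ | φ ∈ C ∧ φ x ∈ Icc 0 ε}

theorem epsActive_mono {X : Type*} {C : Set (X → ℝ)} {x : X} {ε ε' : ℝ} (h : ε ≤ ε') :
    epsActive C x ε ⊆ epsActive C x ε' :=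
  fun _ ⟨hφC, hφ0, hφε⟩ => ⟨hφC, hφ0, hφε.trans h⟩

section WeakStarHull

variable {E : Type*} [AddCommGroup E] [Module ℝ E] [TopologicalSpace E]

theorem wcch_mono {B B' : Set (E →L[ℝ] ℝ)} (h : B ⊆ B') : wcch B ⊆ wcch B' :=
  closure_mono (convexHull_mono (image_mono h))

theorem wcch_nonempty_iff {B : Set (E →L[ℝ] ℝ)} : (wcch B).Nonempty ↔ B.Nonempty := by
  simp only [wcch, closure_nonempty_iff, convexHull_nonempty_iff, image_nonempty]

theorem IsCompact.wcch_of_subset {B B' : Set (E →L[ℝ] ℝ)} (hB' : IsCompact (wcch B'))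
    (h : B ⊆ B') : IsCompact (wcch B) :=
  hB'.of_isClosed_subset isClosed_closure (wcch_mono h)

theorem multSet_eq_iInter (C : Set (E → ℝ)) (D : (E → ℝ) → E →L[ℝ] ℝ) (x : E) :
    multSet C D x = ⋂ n : {n : ℕ // 1 ≤ n}, wcch (D '' epsActive C x (1 / n)) :=
  biInter_eq_iInter _ _

theorem multSet_nonempty_iff_forall_epsActive_nonempty {C : Set (E → ℝ)}
    {D : (E → ℝ) → E →L[ℝ] ℝ} {x : E} (hcpt : IsCompact (wcch (D '' C))) :
    (multSet C D x).Nonempty ↔ ∀ n : ℕ, 1 ≤ n → (epsActive C x (1 / n)).Nonempty := by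
  constructor
  · rintro ⟨ψ, hψ⟩ n hn
    exact (wcch_nonempty_iff.1 ⟨ψ, mem_iInter₂.1 hψ n hn⟩).of_image
  · intro h
    rw [multSet_eq_iInter]
    have : Nonempty {n : ℕ // 1 ≤ n} := ⟨⟨1, le_rfl⟩⟩
    refine IsCompact.nonempty_iInter_of_directed_nonempty_isCompact_isClosed _
      (directed_of_isDirected_le fun m n hmn => wcch_mono (image_mono (epsActive_mono ?_)))
      (fun n => wcch_nonempty_iff.2 ((h n n.2).image D))
      (fun _ => hcpt.wcch_of_subset (image_mono fun _ hφ => hφ.1))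
      (fun _ => isClosed_closure)
    have hm : (0 : ℝ) < m := by exact_mod_cast m.2
    exact one_div_le_one_div_of_le hm (by exact_mod_cast hmn)

end WeakStarHull

theorem multSet_nonempty_iff_general
    {E : Type*} [AddCommGroup E] [Module ℝ E] [TopologicalSpace E]
    (C : Set (E → ℝ)) (hC : C.Nonempty) (D : (E → ℝ) → E →L[ℝ] ℝ) (xh : E)
    (hx : xh ∈ polarSet C)
    (hcpt : IsCompact (wcch (D '' C))) :
    (multSet C D xh).Nonempty ↔ sInf ((fun φ => φ xh) '' C) = 0 := by
  rw [multSet_nonempty_iff_forall_epsActive_nonempty hcpt, sInf_image_eq_zero_iff hC hx]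
  exact forall₂_congr fun n _ =>
    ⟨fun ⟨φ, hφC, _, hφn⟩ => ⟨φ, hφC, hφn⟩, fun ⟨φ, hφC, hφn⟩ => ⟨φ, hφC, hx φ hφC, hφn⟩⟩

/-- If `xh ∈ [C]^×`, each `φ ∈ C` is Gateaux differentiable at `xh` and the
weak-star closed convex hull of `{d_Gφ(xh) : φ ∈ C}` is weak-star compact, then
`T_C(xh) ≠ ∅` iff `inf_{φ ∈ C} φ(xh) = 0`. -/
theorem multSet_nonempty_iff
    {E : Type*} [AddCommGroup E] [Module ℝ E] [TopologicalSpace E]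
    [IsTopologicalAddGroup E] [ContinuousSMul ℝ E] [LocallyConvexSpace ℝ E] [T2Space E]
    (C : Set (E → ℝ)) (hC : C.Nonempty) (D : (E → ℝ) → E →L[ℝ] ℝ) (xh : E)
    (hx : xh ∈ polarSet C)
    (hdiff : ∀ φ ∈ C, HasGateauxAt φ (D φ) xh)
    (hcpt : IsCompact (wcch (D '' C))) :
    (multSet C D xh).Nonempty ↔ sInf ((fun φ => φ xh) '' C) = 0 :=
  multSet_nonempty_iff_general C hC D xh hx hcpt
end
end

section
/- Let X be a Banach space and C a nonempty set of real-valued bounded Lipschitz everywhere-Gateaux-differentiable functions on X which is relatively compact in the Banach space C_b^G(X) with norm ‖f‖_G = max(‖f‖_∞, ‖d_Gf‖_∞). For x̂ ∈ [C]^×, the multiplier set satisfies T_C(x̂) ⊂ { d_Gψ(x̂) : ψ(x̂) = 0, ψ in the ‖·‖_G-closed convex hull of C }. If moreover C is convex and ‖·‖_G-compact, then T_C(x̂) = { d_Gψ(x̂) : ψ(x̂) = 0, ψ ∈ C }. -/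
open Topology Filter Set

noncomputable section

section Stmt8

variable {X : Type*} [NormedAddCommGroup X] [NormedSpace ℝ X]

/-- Elements of `C_b^G(X)` are modelled as pairs `(f, d_Gf)`: a function together with its
(everywhere defined) Gateaux-differential map. `CbGSet` is the set of such pairs which are
bounded, Lipschitz and everywhere Gateaux differentiable with the given differential. -/
def CbGSet : Set ((X → ℝ) × (X → X →L[ℝ] ℝ)) :=
  {p | (∃ M : ℝ, ∀ x : X, |p.1 x| ≤ M) ∧ (∃ L : NNReal, LipschitzWith L p.1) ∧
       (∃ M : ℝ, ∀ x : X, ‖p.2 x‖ ≤ M) ∧ (∀ x : X, HasGateauxAt p.1 (p.2 x) x)}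

/-- The `C_b^G`-norm distance `‖f − g‖_G = max(‖f − g‖_∞, ‖d_Gf − d_Gg‖_∞)` between two
pairs. -/
noncomputable def gNormDist (p q : (X → ℝ) × (X → X →L[ℝ] ℝ)) : ℝ :=
  max (⨆ x : X, |p.1 x - q.1 x|) (⨆ x : X, ‖p.2 x - q.2 x‖)


/-!
A pair `(f, d_G f)` of bounded maps is an element of the Banach space
`ℓ^∞(X, ℝ) × ℓ^∞(X, X*)`, whose norm is `‖·‖_G`, and `C_b^G(X)` is the subspace of Gateaux pairs.
This subspace is closed: along each line a Gateaux function is differentiable, so the mean value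
inequality bounds the Gateaux quotients of `f - g` by `2 ‖f - g‖_G ‖v‖`, uniformly in `t`.
Relative compactness of `C` makes its closed convex hull `K` compact, and with it the closed
convex pieces `K_n = cl co {φ ∈ C : φ(x̂) ∈ [0, 1/n]}`. Evaluating the differential at `x̂` is
continuous from the norm to the weak-star topology, so it maps `K_n` to a weak-star compact convex
set, which therefore contains the `n`-th set defining `T_C(x̂)`. An element of `T_C(x̂)` thus has
preimages in every `K_n`, hence, by compactness, one in their intersection: a `ψ ∈ K` with
`ψ(x̂) = 0`. When `C` is convex and compact, `K = C`.
-/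

section Gateaux

variable {E : Type*} [AddCommGroup E] [Module ℝ E] [TopologicalSpace E]
  {f g : E → ℝ} {f' g' : E →L[ℝ] ℝ} {x : E}

theorem HasGateauxAt.add (hf : HasGateauxAt f f' x) (hg : HasGateauxAt g g' x) :
    HasGateauxAt (f + g) (f' + g') x := fun v => by
  refine (add_zero (0 : ℝ) ▸ (hf v).add (hg v)).congr fun t => ?_
  simp only [Pi.add_apply, add_apply]
  ring

theorem HasGateauxAt.const_smul (c : ℝ) (hf : HasGateauxAt f f' x) :
    HasGateauxAt (c • f) (c • f') x := fun v => by
  refine (mul_zero c ▸ (hf v).const_mul c).congr fun t => ?_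
  simp only [Pi.smul_apply, smul_apply, smul_eq_mul]
  ring

/-- The quotients in direction `-v` give the derivative from the left. -/
theorem HasGateauxAt.hasLineDerivAt (hf : HasGateauxAt f f' x) (v : E) :
    HasLineDerivAt ℝ f (f' v) x v := by
  have right : ∀ w : E, Tendsto (fun t : ℝ => t⁻¹ • (f (x + t • w) - f x)) (𝓝[>] 0) (𝓝 (f' w)) :=
    fun w => by
      refine (zero_add (f' w) ▸ (hf w).add_const (f' w)).congr' ?_
      filter_upwards [self_mem_nhdsWithin] with t (ht : 0 < t)
      rw [smul_eq_mul, sub_div, mul_div_cancel_left₀ _ ht.ne', sub_add_cancel, div_eq_inv_mul]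
  rw [hasLineDerivAt_iff_tendsto_slope_zero, ← nhdsLT_sup_nhdsGT, tendsto_sup]
  refine ⟨?_, right v⟩
  have left := ((right (-v)).comp (neg_zero (G := ℝ) ▸ tendsto_neg_nhdsLT)).neg
  simp only [map_neg, neg_neg] at left
  refine left.congr fun t => ?_
  simp only [Function.comp_apply, smul_eq_mul, neg_smul, smul_neg, neg_neg, inv_neg]
  ring

end Gateaux

theorem abs_sub_le_of_hasGateauxAt {E : Type*} [NormedAddCommGroup E] [NormedSpace ℝ E]
    {f : E → ℝ} {D : E → E →L[ℝ] ℝ} {M : ℝ} (hf : ∀ y, HasGateauxAt f (D y) y)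
    (hD : ∀ y, ‖D y‖ ≤ M) (x y : E) : |f y - f x| ≤ M * ‖y - x‖ := by
  set v := y - x
  have hderiv : ∀ s : ℝ, HasDerivAt (fun s : ℝ => f (x + s • v)) (D (x + s • v) v) s := by
    intro s
    have h := (hf (x + s • v)).hasLineDerivAt v
    rw [HasLineDerivAt, ← sub_self s] at h
    have line_eq : (fun t : ℝ => f (x + s • v + (t - s) • v)) = fun t => f (x + t • v) := by
      funext t
      rw [sub_smul, add_add_sub_cancel]
    exact line_eq ▸ h.comp_sub_const s s
  have hbound : ∀ s : ℝ, ‖D (x + s • v) v‖ ≤ M * ‖v‖ := fun s =>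
    ((D _).le_opNorm v).trans (by gcongr; exact hD _)
  simpa [v] using norm_image_sub_le_of_norm_deriv_le_segment_01'
    (fun s _ => (hderiv s).hasDerivWithinAt) (fun s _ => hbound s)

theorem isSeqCompact_closure_of_forall_exists_tendsto_subseq {α : Type*} [PseudoMetricSpace α]
    {s : Set α} (h : ∀ u : ℕ → α, (∀ n, u n ∈ s) →
      ∃ a, ∃ φ : ℕ → ℕ, StrictMono φ ∧ Tendsto (u ∘ φ) atTop (𝓝 a)) :
    IsSeqCompact (closure s) := by
  intro b hb
  have approx : ∀ n : ℕ, ∃ c ∈ s, dist (b n) c < 1 / ((n : ℝ) + 1) := fun n =>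
    Metric.mem_closure_iff.1 (hb n) _ Nat.one_div_pos_of_nat
  choose c hcs hbc using approx
  obtain ⟨a, φ, hφ, hca⟩ := h c hcs
  refine ⟨a, mem_closure_of_tendsto hca (Eventually.of_forall fun n => hcs (φ n)), φ, hφ, ?_⟩
  refine hca.congr_dist (squeeze_zero (fun _ => dist_nonneg) (fun n => ?_)
    (tendsto_one_div_add_atTop_nhds_zero_nat.comp hφ.tendsto_atTop))
  rw [dist_comm]
  exact (hbc (φ n)).le

theorem isCompact_closure_convexHull_of_forall_exists_tendsto_subseq {E : Type*}
    [NormedAddCommGroup E] [NormedSpace ℝ E] [CompleteSpace E] {s : Set E}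
    (h : ∀ u : ℕ → E, (∀ n, u n ∈ s) →
      ∃ a, ∃ φ : ℕ → ℕ, StrictMono φ ∧ Tendsto (u ∘ φ) atTop (𝓝 a)) :
    IsCompact (closure (convexHull ℝ s)) :=
  (totallyBounded_convexHull.2 ((isSeqCompact_closure_of_forall_exists_tendsto_subseq h
    ).totallyBounded.subset subset_closure)).closure.isCompact_of_isClosed isClosed_closure

theorem iInter_closure_convexHull_image_subset {Z W : Type*} [AddCommGroup Z] [Module ℝ Z]
    [TopologicalSpace Z] [IsTopologicalAddGroup Z] [ContinuousSMul ℝ Z] [AddCommGroup W]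
    [Module ℝ W] [TopologicalSpace W] [IsTopologicalAddGroup W] [ContinuousSMul ℝ W] [T2Space W]
    (T : Z →L[ℝ] W) (e : Z →L[ℝ] ℝ) {S : Set Z} (hS : IsCompact (closure (convexHull ℝ S))) :
    ⋂ n ∈ {n : ℕ | 1 ≤ n}, closure (convexHull ℝ (T '' {b ∈ S | e b ∈ Icc 0 (1 / (n : ℝ))}))
      ⊆ T '' {a ∈ closure (convexHull ℝ S) | e a = 0} := by
  intro z hz
  rw [mem_iInter₂] at hz
  set K : ℕ → Set Z := fun n => closure (convexHull ℝ {b ∈ S | e b ∈ Icc 0 (1 / (n : ℝ))})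
  have hK_sub : ∀ n, K n ⊆ closure (convexHull ℝ S) := fun n =>
    closure_mono (convexHull_mono (sep_subset _ _))
  have hK_cpt : ∀ n, IsCompact (K n) := fun n =>
    hS.of_isClosed_subset isClosed_closure (hK_sub n)
  have hK_e : ∀ n, K n ⊆ e ⁻¹' Icc 0 (1 / (n : ℝ)) := fun n =>
    closure_minimal (convexHull_min (fun b hb => hb.2)
      ((convex_Icc _ _).linear_preimage (e : Z →ₗ[ℝ] ℝ))) (isClosed_Icc.preimage e.continuous)
  have hK_anti : ∀ n, K (n + 2) ⊆ K (n + 1) := fun n =>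
    closure_mono <| convexHull_mono fun b ⟨hbS, h0, h1⟩ => ⟨hbS, h0, h1.trans <| by
      gcongr; norm_num⟩
  have hT : ∀ n : ℕ, closure (convexHull ℝ (T '' {b ∈ S | e b ∈ Icc 0 (1 / (n : ℝ))})) ⊆
      T '' K n := fun n => closure_minimal
    (convexHull_min (image_mono (subset_closure.trans' (subset_convexHull ℝ _)))
      ((convex_convexHull ℝ _).closure.linear_image (T : Z →ₗ[ℝ] W)))
    ((hK_cpt n).image T.continuous).isClosed
  obtain ⟨a, ha⟩ := IsCompact.nonempty_iInter_of_sequence_nonempty_isCompact_isClosed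
    (fun n => K (n + 1) ∩ T ⁻¹' {z}) (fun n => inter_subset_inter_left _ (hK_anti n))
    (fun n => hT (n + 1) (hz (n + 1) (Nat.le_add_left 1 n)))
    ((hK_cpt 1).inter_right (isClosed_singleton.preimage T.continuous))
    (fun n => isClosed_closure.inter (isClosed_singleton.preimage T.continuous))
  rw [mem_iInter] at ha
  refine ⟨a, ⟨hK_sub 1 (ha 0).1, le_antisymm ?_ (hK_e 1 (ha 0).1).1⟩, (ha 0).2⟩
  refine ge_of_tendsto' tendsto_one_div_add_atTop_nhds_zero_nat fun n => ?_
  exact_mod_cast (hK_e (n + 1) (ha n).1).2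

open scoped ENNReal

variable (X) in
abbrev GSpace := lp (fun _ : X => ℝ) ∞ × lp (fun _ : X => X →L[ℝ] ℝ) ∞

namespace GSpace

theorem abs_fst_apply_le (c : GSpace X) (x : X) : |c.1 x| ≤ ‖c‖ :=
  (lp.norm_apply_le_norm ENNReal.top_ne_zero c.1 x).trans (norm_fst_le c)

theorem norm_snd_apply_le (c : GSpace X) (x : X) : ‖c.2 x‖ ≤ ‖c‖ :=
  (lp.norm_apply_le_norm ENNReal.top_ne_zero c.2 x).trans (norm_snd_le c)

def toPair : GSpace X →ₗ[ℝ] (X → ℝ) × (X → X →L[ℝ] ℝ) where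
  toFun c := (c.1, c.2)
  map_add' _ _ := rfl
  map_smul' _ _ := rfl

def evalFst (x : X) : GSpace X →L[ℝ] ℝ :=
  (lp.evalCLM ℝ (fun _ : X => ℝ) ∞ x).comp (ContinuousLinearMap.fst ℝ _ _)

def evalSnd (x : X) : GSpace X →L[ℝ] WeakDual ℝ X :=
  NormedSpace.Dual.continuousLinearMapToWeakDual.comp
    ((lp.evalCLM ℝ (fun _ : X => X →L[ℝ] ℝ) ∞ x).comp (ContinuousLinearMap.snd ℝ _ _))

theorem gNormDist_toPair (a b : GSpace X) : gNormDist (toPair a) (toPair b) = ‖a - b‖ := by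
  rw [Prod.norm_def, lp.norm_eq_ciSup, lp.norm_eq_ciSup]
  rfl

theorem exists_toPair_eq {p : (X → ℝ) × (X → X →L[ℝ] ℝ)} (hp : p ∈ CbGSet) :
    ∃ c : GSpace X, toPair c = p := by
  obtain ⟨⟨M, hM⟩, -, ⟨M', hM'⟩, -⟩ := hp
  refine ⟨(⟨p.1, memℓp_infty ⟨M, ?_⟩⟩, ⟨p.2, memℓp_infty ⟨M', ?_⟩⟩), rfl⟩
  · rintro _ ⟨x, rfl⟩
    exact hM x
  · rintro _ ⟨x, rfl⟩
    exact hM' x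

theorem exists_toPair_eq_of_tendsto_gNormDist {u : ℕ → GSpace X}
    {q : (X → ℝ) × (X → X →L[ℝ] ℝ)} (hq : q ∈ CbGSet)
    (hu : Tendsto (fun n => gNormDist (toPair (u n)) q) atTop (𝓝 0)) :
    ∃ c, toPair c = q ∧ Tendsto u atTop (𝓝 c) := by
  obtain ⟨c, rfl⟩ := exists_toPair_eq hq
  simp only [gNormDist_toPair] at hu
  exact ⟨c, rfl, tendsto_iff_norm_sub_tendsto_zero.2 hu⟩

variable (X) in
def cbGSubmodule : Submodule ℝ (GSpace X) where
  carrier := {c | ∀ x, HasGateauxAt c.1 (c.2 x) x}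
  zero_mem' x v := by simp
  add_mem' ha hb x := (ha x).add (hb x)
  smul_mem' r _ hc x := (hc x).const_smul r

theorem abs_sub_le_of_mem_cbGSubmodule {c : GSpace X} (hc : c ∈ cbGSubmodule X) (x y : X) :
    |c.1 y - c.1 x| ≤ ‖c‖ * ‖y - x‖ :=
  abs_sub_le_of_hasGateauxAt hc (norm_snd_apply_le c) x y

theorem mem_cbGSubmodule_iff {c : GSpace X} : c ∈ cbGSubmodule X ↔ toPair c ∈ CbGSet := by
  refine ⟨fun hc => ⟨⟨‖c‖, abs_fst_apply_le c⟩, ⟨‖c‖.toNNReal, ?_⟩, ⟨‖c‖, norm_snd_apply_le c⟩, hc⟩,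
    fun hc => hc.2.2.2⟩
  refine LipschitzWith.of_dist_le_mul fun y x => ?_
  rw [Real.coe_toNNReal _ (norm_nonneg c), Real.dist_eq, dist_eq_norm]
  exact abs_sub_le_of_mem_cbGSubmodule hc x y

theorem abs_sub_le_of_mem_closure {c : GSpace X} (hc : c ∈ closure (cbGSubmodule X : Set _))
    (x y : X) : |c.1 y - c.1 x| ≤ ‖c‖ * ‖y - x‖ :=
  closure_minimal (fun _ hc => abs_sub_le_of_mem_cbGSubmodule hc x y)
    (isClosed_le ((evalFst y).continuous.sub (evalFst x).continuous).abs
      (continuous_norm.mul continuous_const)) hc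

theorem abs_gateauxQuotient_le_of_mem_closure {c : GSpace X}
    (hc : c ∈ closure (cbGSubmodule X : Set _)) (x v : X) {t : ℝ} (ht : 0 < t) :
    |(c.1 (x + t • v) - c.1 x - t * c.2 x v) / t| ≤ 2 * ‖c‖ * ‖v‖ := by
  have h1 := abs_sub_le_of_mem_closure hc x (x + t • v)
  rw [add_sub_cancel_left, norm_smul, Real.norm_eq_abs, abs_of_pos ht] at h1
  have h2 : |c.2 x v| ≤ ‖c‖ * ‖v‖ :=
    (c.2 x).le_opNorm v |>.trans (by gcongr; exact norm_snd_apply_le _ _)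
  rw [abs_div, abs_of_pos ht, div_le_iff₀ ht]
  calc _ ≤ |c.1 (x + t • v) - c.1 x| + |t * c.2 x v| := abs_sub _ _
    _ ≤ ‖c‖ * (t * ‖v‖) + t * (‖c‖ * ‖v‖) := by
      rw [abs_mul, abs_of_pos ht]
      gcongr
    _ = _ := by ring

theorem isClosed_cbGSubmodule : IsClosed (cbGSubmodule X : Set (GSpace X)) := by
  refine closure_subset_iff_isClosed.1 fun a ha x v => ?_
  rw [Metric.tendsto_nhds]
  intro ε hε
  obtain ⟨b, hb, hab⟩ := Metric.mem_closure_iff.1 ha (ε / (2 * (2 * ‖v‖ + 1))) (by positivity)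
  have hab_mem : a - b ∈ (cbGSubmodule X).topologicalClosure :=
    sub_mem (by rwa [← SetLike.mem_coe, Submodule.topologicalClosure_coe])
      ((cbGSubmodule X).le_topologicalClosure hb)
  rw [← SetLike.mem_coe, Submodule.topologicalClosure_coe] at hab_mem
  have hab' : 2 * ‖a - b‖ * ‖v‖ < ε / 2 := by
    rw [dist_eq_norm, lt_div_iff₀ (by positivity)] at hab
    nlinarith [norm_nonneg (a - b)]
  filter_upwards [Metric.tendsto_nhds.1 (hb x v) (ε / 2) (by positivity), self_mem_nhdsWithin]
    with t hbt (ht : 0 < t)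
  rw [Real.dist_eq, sub_zero] at hbt ⊢
  calc _ = |(b.1 (x + t • v) - b.1 x - t * b.2 x v) / t
          + ((a - b).1 (x + t • v) - (a - b).1 x - t * (a - b).2 x v) / t| := by
        simp only [Prod.fst_sub, Prod.snd_sub, lp.coeFn_sub, Pi.sub_apply, sub_apply]
        ring_nf
    _ < ε / 2 + ε / 2 := (abs_add_le _ _).trans_lt <| add_lt_add hbt <|
        (abs_gateauxQuotient_le_of_mem_closure hab_mem x v ht).trans_lt hab'
    _ = ε := add_halves ε

variable {P : Set ((X → ℝ) × (X → X →L[ℝ] ℝ))}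

theorem toPair_mem_convexHull {c : GSpace X} (hc : c ∈ convexHull ℝ (toPair ⁻¹' P)) :
    toPair c ∈ convexHull ℝ P := by
  have : toPair '' convexHull ℝ (toPair ⁻¹' P) ⊆ convexHull ℝ P := by
    rw [LinearMap.image_convexHull]
    exact convexHull_mono (image_preimage_subset _ _)
  exact this ⟨c, hc, rfl⟩

theorem toPair_mem_CbGSet_of_mem_closure_convexHull (hP : P ⊆ CbGSet) {c : GSpace X}
    (hc : c ∈ closure (convexHull ℝ (toPair ⁻¹' P))) : toPair c ∈ CbGSet :=
  mem_cbGSubmodule_iff.1 <| closure_minimal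
    (convexHull_min (fun _ hb => mem_cbGSubmodule_iff.2 (hP hb)) (Submodule.convex _))
    isClosed_cbGSubmodule hc

theorem isCompact_closure_convexHull_preimage_toPair
    (hP : ∀ u : ℕ → (X → ℝ) × (X → X →L[ℝ] ℝ), (∀ n, u n ∈ P) →
      ∃ σ : ℕ → ℕ, StrictMono σ ∧ ∃ q ∈ CbGSet,
        Tendsto (fun n => gNormDist (u (σ n)) q) atTop (𝓝 0)) :
    IsCompact (closure (convexHull ℝ (toPair ⁻¹' P))) := by
  refine isCompact_closure_convexHull_of_forall_exists_tendsto_subseq fun u hu => ?_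
  obtain ⟨σ, hσ, q, hq, hlim⟩ := hP (toPair ∘ u) hu
  obtain ⟨c, -, hc⟩ := exists_toPair_eq_of_tendsto_gNormDist hq hlim
  exact ⟨c, σ, hσ, hc⟩

theorem isClosed_preimage_toPair (hP : P ⊆ CbGSet)
    (hPc : ∀ u : ℕ → (X → ℝ) × (X → X →L[ℝ] ℝ), (∀ n, u n ∈ P) →
      ∃ σ : ℕ → ℕ, StrictMono σ ∧ ∃ q ∈ P,
        Tendsto (fun n => gNormDist (u (σ n)) q) atTop (𝓝 0)) :
    IsClosed (toPair ⁻¹' P : Set (GSpace X)) := by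
  refine isClosed_of_closure_subset fun a ha => ?_
  obtain ⟨u, hu, hlim⟩ := mem_closure_iff_seq_limit.1 ha
  obtain ⟨σ, hσ, q, hq, hqlim⟩ := hPc (toPair ∘ u) hu
  obtain ⟨c, rfl, hc⟩ := exists_toPair_eq_of_tendsto_gNormDist (hP hq) hqlim
  rwa [mem_preimage, tendsto_nhds_unique (hlim.comp hσ.tendsto_atTop) hc]

theorem iInter_wcch_subset_image_evalSnd (hP : P ⊆ CbGSet)
    (hPrc : ∀ u : ℕ → (X → ℝ) × (X → X →L[ℝ] ℝ), (∀ n, u n ∈ P) →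
      ∃ σ : ℕ → ℕ, StrictMono σ ∧ ∃ q ∈ CbGSet,
        Tendsto (fun n => gNormDist (u (σ n)) q) atTop (𝓝 0)) (xh : X) :
    (⋂ n ∈ {n : ℕ | 1 ≤ n},
        wcch {q : X →L[ℝ] ℝ | ∃ p ∈ P, p.1 xh ∈ Icc (0:ℝ) (1/(n:ℝ)) ∧ p.2 xh = q})
      ⊆ evalSnd xh '' {a ∈ closure (convexHull ℝ (toPair ⁻¹' P)) | evalFst xh a = 0} := by
  refine (iInter₂_mono fun n _ => closure_mono (convexHull_mono ?_)).trans
    (iInter_closure_convexHull_image_subset (evalSnd xh) (evalFst xh)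
      (isCompact_closure_convexHull_preimage_toPair hPrc))
  rintro _ ⟨_, ⟨p, hp, hpI, rfl⟩, rfl⟩
  obtain ⟨c, rfl⟩ := exists_toPair_eq (hP hp)
  exact ⟨c, ⟨hp, hpI⟩, rfl⟩

end GSpace

theorem multSet_subset_of_relatively_compact_general
    (P : Set ((X → ℝ) × (X → X →L[ℝ] ℝ))) (hPsub : P ⊆ CbGSet)
    (hrc : ∀ u : ℕ → (X → ℝ) × (X → X →L[ℝ] ℝ), (∀ n, u n ∈ P) →
      ∃ σ : ℕ → ℕ, StrictMono σ ∧ ∃ q ∈ CbGSet,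
        Filter.Tendsto (fun n => gNormDist (u (σ n)) q) Filter.atTop (𝓝 0))
    (xh : X) :
    ((⋂ n ∈ {n : ℕ | 1 ≤ n},
        wcch {q : X →L[ℝ] ℝ | ∃ p ∈ P, p.1 xh ∈ Icc (0:ℝ) (1/(n:ℝ)) ∧ p.2 xh = q})
      ⊆ {z : WeakDual ℝ X | ∃ ψ : (X → ℝ) × (X → X →L[ℝ] ℝ), ψ ∈ CbGSet ∧
          (∃ u : ℕ → (X → ℝ) × (X → X →L[ℝ] ℝ), (∀ n, u n ∈ convexHull ℝ P) ∧
            Filter.Tendsto (fun n => gNormDist (u n) ψ) Filter.atTop (𝓝 0)) ∧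
          ψ.1 xh = 0 ∧ toWD (ψ.2 xh) = z}) ∧
    (Convex ℝ P →
      (∀ u : ℕ → (X → ℝ) × (X → X →L[ℝ] ℝ), (∀ n, u n ∈ P) →
        ∃ σ : ℕ → ℕ, StrictMono σ ∧ ∃ q ∈ P,
          Filter.Tendsto (fun n => gNormDist (u (σ n)) q) Filter.atTop (𝓝 0)) →
      (⋂ n ∈ {n : ℕ | 1 ≤ n},
          wcch {q : X →L[ℝ] ℝ | ∃ p ∈ P, p.1 xh ∈ Icc (0:ℝ) (1/(n:ℝ)) ∧ p.2 xh = q})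
        = {z : WeakDual ℝ X | ∃ ψ ∈ P, ψ.1 xh = 0 ∧ toWD (ψ.2 xh) = z}) := by
  have core := GSpace.iInter_wcch_subset_image_evalSnd hPsub hrc xh
  refine ⟨fun z hz => ?_, fun hconv hcpt => subset_antisymm (fun z hz => ?_) ?_⟩
  · obtain ⟨a, ⟨ha, ha0⟩, rfl⟩ := core hz
    obtain ⟨u, hu, hlim⟩ := mem_closure_iff_seq_limit.1 ha
    refine ⟨GSpace.toPair a, GSpace.toPair_mem_CbGSet_of_mem_closure_convexHull hPsub ha,
      ⟨GSpace.toPair ∘ u, fun n => GSpace.toPair_mem_convexHull (hu n), ?_⟩, ha0, rfl⟩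
    simpa only [Function.comp_apply, GSpace.gNormDist_toPair] using
      tendsto_iff_norm_sub_tendsto_zero.1 hlim
  · obtain ⟨a, ⟨ha, ha0⟩, rfl⟩ := core hz
    rw [(hconv.linear_preimage GSpace.toPair).convexHull_eq,
      (GSpace.isClosed_preimage_toPair hPsub hcpt).closure_eq] at ha
    exact ⟨GSpace.toPair a, ha, ha0, rfl⟩
  · rintro z ⟨ψ, hψ, hψ0, rfl⟩
    refine mem_iInter₂.2 fun n _ =>
      subset_closure (subset_convexHull ℝ _ ⟨ψ.2 xh, ⟨ψ, hψ, ?_, rfl⟩, rfl⟩)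
    rw [hψ0]
    exact ⟨le_rfl, by positivity⟩

/-- If `C` (modelled as a set `P` of pairs) is a nonempty relatively compact
subset of `(C_b^G(X), ‖·‖_G)` and `xh ∈ [C]^×`, then
`T_C(xh) ⊆ {d_Gψ(xh) : ψ(xh) = 0, ψ ∈ ‖·‖_G-closed convex hull of C}`; if moreover `C` is
convex and `‖·‖_G`-compact, then `T_C(xh) = {d_Gψ(xh) : ψ(xh) = 0, ψ ∈ C}`. -/
theorem multSet_subset_of_relatively_compact [CompleteSpace X]
    (P : Set ((X → ℝ) × (X → X →L[ℝ] ℝ))) (hPne : P.Nonempty) (hPsub : P ⊆ CbGSet)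
    (hrc : ∀ u : ℕ → (X → ℝ) × (X → X →L[ℝ] ℝ), (∀ n, u n ∈ P) →
      ∃ σ : ℕ → ℕ, StrictMono σ ∧ ∃ q ∈ CbGSet,
        Filter.Tendsto (fun n => gNormDist (u (σ n)) q) Filter.atTop (𝓝 0))
    (xh : X) (hx : ∀ p ∈ P, 0 ≤ p.1 xh) :
    ((⋂ n ∈ {n : ℕ | 1 ≤ n},
        wcch {q : X →L[ℝ] ℝ | ∃ p ∈ P, p.1 xh ∈ Icc (0:ℝ) (1/(n:ℝ)) ∧ p.2 xh = q})
      ⊆ {z : WeakDual ℝ X | ∃ ψ : (X → ℝ) × (X → X →L[ℝ] ℝ), ψ ∈ CbGSet ∧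
          (∃ u : ℕ → (X → ℝ) × (X → X →L[ℝ] ℝ), (∀ n, u n ∈ convexHull ℝ P) ∧
            Filter.Tendsto (fun n => gNormDist (u n) ψ) Filter.atTop (𝓝 0)) ∧
          ψ.1 xh = 0 ∧ toWD (ψ.2 xh) = z}) ∧
    (Convex ℝ P →
      (∀ u : ℕ → (X → ℝ) × (X → X →L[ℝ] ℝ), (∀ n, u n ∈ P) →
        ∃ σ : ℕ → ℕ, StrictMono σ ∧ ∃ q ∈ P,
          Filter.Tendsto (fun n => gNormDist (u (σ n)) q) Filter.atTop (𝓝 0)) →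
      (⋂ n ∈ {n : ℕ | 1 ≤ n},
          wcch {q : X →L[ℝ] ℝ | ∃ p ∈ P, p.1 xh ∈ Icc (0:ℝ) (1/(n:ℝ)) ∧ p.2 xh = q})
        = {z : WeakDual ℝ X | ∃ ψ ∈ P, ψ.1 xh = 0 ∧ toWD (ψ.2 xh) = z}) :=
  multSet_subset_of_relatively_compact_general P hPsub hrc xh

end Stmt8
end
end

section
/- Let T be a nonempty Hausdorff compact topological space, x̂ ∈ ℝ^p, and h : ℝ^p × T → ℝ a function such that: (i) for each t ∈ T, h(·, t) is Gateaux differentiable at x̂ with Gateaux-differential ∇_x h(x̂, t); (ii) the maps t ↦ h(x̂, t) and t ↦ ∇_x h(x̂, t) are continuous on T; (iii) T(x̂) := { t ∈ T : h(x̂, t) = 0 } is nonempty. Let C = { h(·, t) : t ∈ T } and suppose x̂ ∈ [C]^× (i.e. h(x̂, t) ≥ 0 for all t ∈ T). Then T_C(x̂) = conv{ ∇_x h(x̂, t) : t ∈ T(x̂) }. -/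
open Topology Filter Set

noncomputable section

/-- Carathéodory with a fixed number of points: any element of the convex hull of a nonempty
set in a finite-dimensional space is a convex combination of `finrank + 1` points. -/
theorem exists_rep_of_mem_convexHull {E : Type} [NormedAddCommGroup E] [NormedSpace ℝ E]
    [FiniteDimensional ℝ E] {s : Set E} (hs : s.Nonempty) {x : E}
    (hx : x ∈ convexHull ℝ s) :
    ∃ (w : Fin (Module.finrank ℝ E + 1) → ℝ) (f : Fin (Module.finrank ℝ E + 1) → E),
      (∀ i, 0 ≤ w i) ∧ ∑ i, w i = 1 ∧ (∀ i, f i ∈ s) ∧ ∑ i, w i • f i = x := by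
  classical
  obtain ⟨ι, hι, z, w, hzs, hai, hw0, hw1, hwz⟩ := eq_pos_convex_span_of_mem_convexHull hx
  obtain ⟨x₀, hx₀⟩ := hs
  letI := hι
  have hcard : Fintype.card ι ≤ Module.finrank ℝ E + 1 :=
    hai.card_le_finrank_succ.trans (by
      have := Submodule.finrank_le (vectorSpan ℝ (Set.range z))
      omega)
  obtain ⟨emb⟩ := Function.Embedding.nonempty_of_card_le
    (by simpa using hcard : Fintype.card ι ≤ Fintype.card (Fin (Module.finrank ℝ E + 1)))
  set N := Module.finrank ℝ E + 1
  -- generic summation lemma over the embedding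
  have hsum : ∀ {M : Type} [AddCommMonoid M] (F : Fin N → M),
      (∀ i, (¬∃ a, emb a = i) → F i = 0) → ∑ i, F i = ∑ a, F (emb a) := by
    intro M _ F hF
    have h1 : ∑ a : ι, F (emb a) = ∑ i ∈ Finset.univ.image emb, F i :=
      (Finset.sum_image (fun a _ b _ hab => emb.injective hab)).symm
    rw [h1]
    refine (Finset.sum_subset (Finset.subset_univ _) fun i _ hi => hF i ?_).symm
    rintro ⟨a, ha⟩
    exact hi (Finset.mem_image.mpr ⟨a, Finset.mem_univ a, ha⟩)
  set u : Fin N → ℝ := Function.extend (⇑emb) w (fun _ => 0) with hu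
  set v : Fin N → E := Function.extend (⇑emb) z (fun _ => x₀) with hv
  have hu_on : ∀ a, u (emb a) = w a := fun a => emb.injective.extend_apply _ _ _
  have hv_on : ∀ a, v (emb a) = z a := fun a => emb.injective.extend_apply _ _ _
  have hu_off : ∀ i, (¬∃ a, emb a = i) → u i = 0 := fun i hi =>
    Function.extend_apply' _ _ _ hi
  have hv_off : ∀ i, (¬∃ a, emb a = i) → v i = x₀ := fun i hi =>
    Function.extend_apply' _ _ _ hi
  refine ⟨u, v, ?_, ?_, ?_, ?_⟩
  · intro i
    by_cases hi : ∃ a, emb a = i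
    · obtain ⟨a, rfl⟩ := hi
      rw [hu_on]
      exact (hw0 a).le
    · rw [hu_off i hi]
  · rw [hsum u hu_off]
    rw [← hw1]
    exact Finset.sum_congr rfl fun a _ => hu_on a
  · intro i
    by_cases hi : ∃ a, emb a = i
    · obtain ⟨a, rfl⟩ := hi
      rw [hv_on]
      exact hzs ⟨a, rfl⟩
    · rw [hv_off i hi]
      exact hx₀
  · have hoff : ∀ i, (¬∃ a, emb a = i) → u i • v i = 0 := fun i hi => by
      rw [hu_off i hi, zero_smul]
    rw [hsum (fun i => u i • v i) hoff]
    rw [← hwz]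
    exact Finset.sum_congr rfl fun a _ => by rw [hu_on, hv_on]

/-- For a semi-infinite family of constraints `h(·,t) ≥ 0`, `t` in a nonempty
compact Hausdorff space `T`, with `h(·,t)` Gateaux differentiable at `xh`, `t ↦ h(xh,t)` and
`t ↦ ∇_x h(xh,t)` continuous, `T(xh) ≠ ∅`, and `xh` feasible, the multiplier set satisfies
`T_C(xh) = conv{∇_x h(xh,t) : t ∈ T(xh)}`. -/
theorem multSet_semiInfinite
    {p : ℕ} {T : Type*} [TopologicalSpace T] [CompactSpace T] [T2Space T] [Nonempty T]
    (xh : Fin p → ℝ) (h : (Fin p → ℝ) → T → ℝ)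
    (D : T → ((Fin p → ℝ) →L[ℝ] ℝ))
    (hdiff : ∀ t : T, HasGateauxAt (fun x => h x t) (D t) xh)
    (hcont1 : Continuous fun t : T => h xh t)
    (hcont2 : Continuous D)
    (hTx : ∃ t : T, h xh t = 0)
    (hfeas : ∀ t : T, 0 ≤ h xh t) :
    (⋂ n ∈ {n : ℕ | 1 ≤ n},
        convexHull ℝ {q : (Fin p → ℝ) →L[ℝ] ℝ | ∃ t : T, h xh t ∈ Icc (0:ℝ) (1/(n:ℝ)) ∧ D t = q})
      = convexHull ℝ {q : (Fin p → ℝ) →L[ℝ] ℝ | ∃ t : T, h xh t = 0 ∧ D t = q} := by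
  classical
  set N := Module.finrank ℝ ((Fin p → ℝ) →L[ℝ] ℝ) + 1 with hN
  obtain ⟨t₀, ht₀⟩ := hTx
  apply Subset.antisymm
  · -- hard direction
    intro q hq
    simp only [mem_iInter, mem_setOf_eq] at hq
    -- the compact sets of representations
    set K : ℕ → Set ((Fin N → ℝ) × (Fin N → T)) := fun n =>
      {wf | (∀ i, 0 ≤ wf.1 i) ∧ ∑ i, wf.1 i = 1 ∧
        (∀ i, h xh (wf.2 i) ≤ 1 / ((n : ℝ) + 1)) ∧ ∑ i, wf.1 i • D (wf.2 i) = q} with hK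
    have hKmono : ∀ n, K (n + 1) ⊆ K n := by
      intro n wf ⟨h1, h2, h3, h4⟩
      refine ⟨h1, h2, fun i => (h3 i).trans ?_, h4⟩
      apply one_div_le_one_div_of_le <;> push_cast <;> linarith
    have hKne : ∀ n, (K n).Nonempty := by
      intro n
      have h1n : (0:ℝ) < 1 / ((n:ℝ) + 1) := by positivity
      have hq' := hq (n + 1) (Nat.le_add_left 1 n)
      have hsne : {q : (Fin p → ℝ) →L[ℝ] ℝ | ∃ t : T, h xh t ∈ Icc (0:ℝ) (1/((n+1:ℕ):ℝ)) ∧ D t = q}.Nonempty := by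
        refine ⟨D t₀, t₀, ?_, rfl⟩
        rw [ht₀]
        constructor
        · exact le_refl 0
        · push_cast; positivity
      obtain ⟨w, f, hw0, hw1, hf, hwf⟩ := exists_rep_of_mem_convexHull hsne hq'
      choose g hg1 hg2 using hf
      refine ⟨(w, g), hw0, hw1, fun i => ?_, by simp only []; rw [← hwf]; congr 1; ext i; rw [hg2 i]⟩
      have := (hg1 i).2
      push_cast at this
      exact this
    have hKcl : ∀ n, IsClosed (K n) := by
      intro n
      have c1 : ∀ i : Fin N, Continuous fun wf : (Fin N → ℝ) × (Fin N → T) => wf.1 i :=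
        fun i => (continuous_apply i).comp continuous_fst
      have c2 : ∀ i : Fin N, Continuous fun wf : (Fin N → ℝ) × (Fin N → T) => wf.2 i :=
        fun i => (continuous_apply i).comp continuous_snd
      have hKeq : K n = (⋂ i, {wf : (Fin N → ℝ) × (Fin N → T) | 0 ≤ wf.1 i}) ∩
          ({wf : (Fin N → ℝ) × (Fin N → T) | ∑ i, wf.1 i = 1} ∩
          ((⋂ i, {wf : (Fin N → ℝ) × (Fin N → T) | h xh (wf.2 i) ≤ 1 / ((n : ℝ) + 1)}) ∩
          {wf : (Fin N → ℝ) × (Fin N → T) | ∑ i, wf.1 i • D (wf.2 i) = q})) := by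
        ext wf
        simp only [hK, mem_setOf_eq, mem_inter_iff, mem_iInter]
      rw [hKeq]
      refine IsClosed.inter (isClosed_iInter fun i => ?_) (IsClosed.inter ?_ (IsClosed.inter
        (isClosed_iInter fun i => ?_) ?_))
      · exact isClosed_le continuous_const (c1 i)
      · exact isClosed_eq (continuous_finset_sum _ fun i _ => c1 i) continuous_const
      · exact isClosed_le (hcont1.comp (c2 i)) continuous_const
      · exact isClosed_eq (continuous_finset_sum _ fun i _ =>
          (c1 i).smul ((hcont2.comp (c2 i)))) continuous_const
    have hKcompact : IsCompact (K 0) := by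
      have hsub : K 0 ⊆ (Set.Icc (0 : Fin N → ℝ) 1) ×ˢ (univ : Set (Fin N → T)) := by
        rintro ⟨w, f⟩ ⟨h1, h2, _, _⟩
        refine ⟨⟨fun i => h1 i, fun i => ?_⟩, mem_univ _⟩
        calc w i ≤ ∑ j, w j := Finset.single_le_sum (fun j _ => h1 j) (Finset.mem_univ i)
        _ = 1 := h2
      exact IsCompact.of_isClosed_subset ((isCompact_Icc).prod isCompact_univ) (hKcl 0) hsub
    obtain ⟨⟨w, f⟩, hwf⟩ := IsCompact.nonempty_iInter_of_sequence_nonempty_isCompact_isClosed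
      K hKmono hKne hKcompact hKcl
    simp only [mem_iInter] at hwf
    have h1 : ∀ i, 0 ≤ w i := (hwf 0).1
    have h2 : ∑ i, w i = 1 := (hwf 0).2.1
    have h4 : ∑ i, w i • D (f i) = q := (hwf 0).2.2.2
    have hzero : ∀ i, h xh (f i) = 0 := by
      intro i
      refine le_antisymm ?_ (hfeas (f i))
      exact ge_of_tendsto tendsto_one_div_add_atTop_nhds_zero_nat
        (Eventually.of_forall fun n => (hwf n).2.2.1 i)
    have hqeq : q = Finset.univ.centerMass w (fun i => D (f i)) := by
      rw [Finset.centerMass_eq_of_sum_1 _ _ h2, h4]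
    rw [hqeq]
    exact Finset.centerMass_mem_convexHull _ (fun i _ => h1 i) (by rw [h2]; norm_num)
      (fun i _ => ⟨f i, hzero i, rfl⟩)
  · -- easy direction
    simp only [subset_iInter_iff]
    intro n hn
    apply convexHull_mono
    rintro q ⟨t, ht, rfl⟩
    have hn' : (0:ℝ) < n := by exact_mod_cast hn
    exact ⟨t, ⟨ht.ge, by rw [ht]; positivity⟩, rfl⟩
end
end

section
/- Let E be a Hausdorff locally convex topological vector space, w ∈ E, and (K_n)_{n≥1} a non-increasing sequence of nonempty compact subsets of E. Then ⋂_{n≥1} [w, K_n] = [w, ⋂_{n≥1} K_n], where [w, K] := { λw + (1−λ)x : λ ∈ [0,1], x ∈ K } denotes the convex hull of the point w and the set K. -/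
open Topology Filter Set

noncomputable section

/-!
`[w, K]` is the image of `[0, 1] × K` under the continuous map `(λ, x) ↦ λ • w + (1 - λ) • x`.
A continuous image of a decreasing intersection of compact sets is the intersection of the images:
if `y` lies in every image, the traces of the sets on the fibre over `y` are nonempty, compact and
decreasing, so by Cantor's intersection theorem they share a point.
-/

def segmentHull {E : Type*} [AddCommGroup E] [Module ℝ E] (w : E) (K : Set E) : Set E :=
  {y | ∃ l ∈ Icc (0 : ℝ) 1, ∃ x ∈ K, y = l • w + (1 - l) • x}

theorem segmentHull_eq_image {E : Type*} [AddCommGroup E] [Module ℝ E] (w : E) (K : Set E) :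
    segmentHull w K = (fun p : ℝ × E => p.1 • w + (1 - p.1) • p.2) '' (Icc 0 1 ×ˢ K) := by
  ext y
  simp only [segmentHull, mem_image, mem_prod, Prod.exists]
  constructor
  · rintro ⟨l, hl, x, hx, rfl⟩
    exact ⟨l, x, ⟨hl, hx⟩, rfl⟩
  · rintro ⟨l, x, ⟨hl, hx⟩, rfl⟩
    exact ⟨l, hl, x, hx, rfl⟩

theorem Continuous.image_iInter_of_directed_isCompact {X Y ι : Type*} [TopologicalSpace X]
    [TopologicalSpace Y] [T2Space X] [T1Space Y] [Nonempty ι] {f : X → Y} (hf : Continuous f)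
    {S : ι → Set X} (hdir : Directed (· ⊇ ·) S) (hS : ∀ i, IsCompact (S i)) :
    f '' ⋂ i, S i = ⋂ i, f '' S i := by
  refine (image_iInter_subset S f).antisymm fun y hy => ?_
  have hfibre : IsClosed (f ⁻¹' {y}) := isClosed_singleton.preimage hf
  obtain ⟨x, hx⟩ := IsCompact.nonempty_iInter_of_directed_nonempty_isCompact_isClosed
    (fun i => S i ∩ f ⁻¹' {y})
    (fun i j => let ⟨k, hi, hj⟩ := hdir i j
      ⟨k, inter_subset_inter_left _ hi, inter_subset_inter_left _ hj⟩)
    (fun i => by simpa [inter_comm, ← image_inter_nonempty_iff] using mem_iInter.mp hy i)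
    (fun i => (hS i).inter_right hfibre) (fun i => (hS i).isClosed.inter hfibre)
  simp only [mem_iInter, mem_inter_iff, mem_preimage, mem_singleton_iff] at hx
  exact ⟨x, mem_iInter.mpr fun i => (hx i).1, (hx (Classical.arbitrary ι)).2⟩

theorem iInter_segment_hull_eq_general
    {E : Type*} [AddCommGroup E] [Module ℝ E] [TopologicalSpace E]
    [IsTopologicalAddGroup E] [ContinuousSMul ℝ E] [T2Space E]
    (w : E) (K : ℕ → Set E)
    (hcpt : ∀ n, IsCompact (K n)) (hmono : Antitone K) :
    (⋂ n ∈ {n : ℕ | 1 ≤ n},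
        {y : E | ∃ l ∈ Icc (0:ℝ) 1, ∃ x ∈ K n, y = l • w + (1 - l) • x})
      = {y : E | ∃ l ∈ Icc (0:ℝ) 1, ∃ x ∈ ⋂ n ∈ {n : ℕ | 1 ≤ n}, K n,
          y = l • w + (1 - l) • x} := by
  change ⋂ n ≥ 1, segmentHull w (K n) = segmentHull w (⋂ n ≥ 1, K n)
  simp only [iInter_ge_eq_iInter_nat_add, segmentHull_eq_image, prod_iInter]
  have hanti : Antitone fun n => Icc (0 : ℝ) 1 ×ˢ K (n + 1) :=
    fun _ _ h => prod_mono_right (hmono (Nat.add_le_add_right h 1))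
  have hf : Continuous fun p : ℝ × E => p.1 • w + (1 - p.1) • p.2 := by fun_prop
  exact (hf.image_iInter_of_directed_isCompact hanti.directed_ge
    fun n => isCompact_Icc.prod (hcpt _)).symm

/-- For `w ∈ E` and a non-increasing sequence `(K_n)_{n ≥ 1}` of nonempty
compact subsets of a Hausdorff locally convex space `E`, one has
`⋂_{n≥1} [w, K_n] = [w, ⋂_{n≥1} K_n]`, where `[w, K] = {λw + (1−λ)x : λ ∈ [0,1], x ∈ K}`. -/
theorem iInter_segment_hull_eq
    {E : Type*} [AddCommGroup E] [Module ℝ E] [TopologicalSpace E]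
    [IsTopologicalAddGroup E] [ContinuousSMul ℝ E] [LocallyConvexSpace ℝ E] [T2Space E]
    (w : E) (K : ℕ → Set E)
    (hne : ∀ n, (K n).Nonempty) (hcpt : ∀ n, IsCompact (K n)) (hmono : Antitone K) :
    (⋂ n ∈ {n : ℕ | 1 ≤ n},
        {y : E | ∃ l ∈ Icc (0:ℝ) 1, ∃ x ∈ K n, y = l • w + (1 - l) • x})
      = {y : E | ∃ l ∈ Icc (0:ℝ) 1, ∃ x ∈ ⋂ n ∈ {n : ℕ | 1 ≤ n}, K n,
          y = l • w + (1 - l) • x} :=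
  iInter_segment_hull_eq_general w K hcpt hmono
end
end

section
/- Let E be a Hausdorff locally convex topological vector space, Ω ⊂ E a nonempty open set, F ⊂ E a nonempty set, and f : Ω → ℝ. Assume x̂ ∈ Ω maximizes f over Ω ∩ F, that f is Gateaux differentiable at x̂, and that F is weak-admissible at x̂ determined by C. Then: if x̂ ∈ int(F), d_Gf(x̂) = 0; and if x̂ ∈ F \ int(F), then 0 ∈ [d_Gf(x̂), T_C(x̂)], i.e. there exist (λ*, β*) ∈ ℝ₊ × ℝ₊ with (λ*, β*) ≠ (0,0) and x* ∈ T_C(x̂) such that λ* d_Gf(x̂) + β* x* = 0. If moreover 0 ∉ T_C(x̂), one can take λ* = 1. -/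
/-!
At an interior maximiser the Gateaux derivative vanishes in every direction. On the boundary let
`T = T_C(x̂)` and suppose `0 ∉ [d_Gf(x̂), T]`. This set is weak-star compact and convex, so
evaluation at some `w ∈ E` separates it strictly from `0`: `d_Gf(x̂) w > 0` and `q w > u > 0` for
`q ∈ T`. By compactness the bound `u` already holds on the closed convex hull of the differentials
of the constraints with `φ x̂ ≤ 1 / (n + 1)`, for some `n`. Equi-differentiability then makes `w`
a feasible direction, since these nearly active constraints increase along it while the others
have a margin of `1 / (n + 1)`; this contradicts maximality. Finally `0 ∈ [d_Gf(x̂), T]` yields the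
multipliers, and `λ = 0` is only possible when `0 ∈ T`.
-/

open Topology Filter Set

noncomputable section

section Gateaux

variable {E : Type*} [AddCommGroup E] [Module ℝ E] [TopologicalSpace E]

theorem HasGateauxAt.apply_nonpos_of_eventually_le {f : E → ℝ} {f' : E →L[ℝ] ℝ} {x v : E}
    (hf : HasGateauxAt f f' x) (h : ∀ᶠ t in 𝓝[>] (0 : ℝ), f (x + t • v) ≤ f x) : f' v ≤ 0 := by
  have hquot : ∀ᶠ t in 𝓝[>] (0 : ℝ), (f (x + t • v) - f x - t * f' v) / t ≤ -f' v := by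
    filter_upwards [h, self_mem_nhdsWithin] with t ht (ht0 : 0 < t)
    rw [div_le_iff₀ ht0]
    nlinarith
  linarith [le_of_tendsto (hf v) hquot]

variable [ContinuousAdd E] [ContinuousSMul ℝ E]

theorem eventually_add_smul_mem {x : E} {s : Set E} (hs : s ∈ 𝓝 x) (v : E) :
    ∀ᶠ t in 𝓝 (0 : ℝ), x + t • v ∈ s :=
  (continuous_const.add (continuous_id.smul continuous_const)).tendsto' 0 x (by simp) hs

theorem HasGateauxAt.eq_zero_of_isLocalMax {f : E → ℝ} {f' : E →L[ℝ] ℝ} {x : E}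
    (hf : HasGateauxAt f f' x) (hmax : IsLocalMax f x) : f' = 0 := by
  have hnonpos : ∀ v, f' v ≤ 0 := fun v =>
    hf.apply_nonpos_of_eventually_le
      (eventually_nhdsWithin_of_eventually_nhds (eventually_add_smul_mem hmax v))
  ext v
  linarith [hnonpos v, hnonpos (-v), map_neg f' v, zero_apply (F := E →L[ℝ] ℝ) v]

end Gateaux

section PolarSet

variable {E : Type*} [TopologicalSpace E] {C : Set (E → ℝ)} {x : E}

theorem mem_interior_polarSet_of_forall_lt (hlsc : EquiLscAt C x) {ε : ℝ} (hε : 0 < ε)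
    (hC : ∀ φ ∈ C, ε < φ x) : x ∈ interior (polarSet C) := by
  obtain ⟨O, hO, hOlsc⟩ := hlsc ε hε
  refine mem_interior_iff_mem_nhds.mpr (mem_of_superset hO fun y hy φ hφ => ?_)
  linarith [hOlsc y hy φ hφ, hC φ hφ]

variable [AddCommGroup E] [Module ℝ E]

theorem EquiGateauxAt.eventually_add_smul_mem_polarSet {D : (E → ℝ) → E →L[ℝ] ℝ} {v : E}
    (hequi : EquiGateauxAt C D x) (hx : x ∈ polarSet C)
    (hbdd : BddBelow ((fun φ => D φ v) '' C)) {ε σ : ℝ} (hε : 0 < ε) (hσ : 0 < σ)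
    (hnear : ∀ φ ∈ C, φ x ≤ ε → σ ≤ D φ v) :
    ∀ᶠ t in 𝓝[>] (0 : ℝ), x + t • v ∈ polarSet C := by
  obtain ⟨m, hm⟩ := hbdd
  obtain ⟨δ, hδ, hrem⟩ := hequi.2 v σ hσ
  -- constraints with `ε < φ x` keep a margin that steps shorter than `ε / (σ + |m|)` cannot use up
  have hstep : 0 < ε / (σ + |m|) := by positivity
  filter_upwards [Ioo_mem_nhdsGT (lt_min hδ hstep)] with t ⟨ht0, ht⟩ φ hφ
  have hlin : φ x + t * D φ v - σ * t ≤ φ (x + t • v) := by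
    have := (abs_le.mp (hrem t ht0 (ht.trans_le (min_le_left _ _)) φ hφ)).1
    rw [le_div_iff₀ ht0] at this
    linarith
  rcases le_or_gt (φ x) ε with hclose | hfar
  · nlinarith [hnear φ hφ hclose, hx φ hφ]
  · have hsmall : t * (σ + |m|) < ε :=
      (lt_div_iff₀ (by positivity)).mp (ht.trans_le (min_le_right _ _))
    nlinarith [hm ⟨φ, hφ, rfl⟩, neg_abs_le m]

end PolarSet

section NearActiveHull

variable {E : Type*} [AddCommGroup E] [Module ℝ E] [TopologicalSpace E]

/-- The `(n + 1)`-st hull in `multSet`, reindexed so that the family is antitone on all of `ℕ`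
(at index `0`, the bound `1 / 0 = 0` of `multSet` would not fit). -/
def nearActiveHull (C : Set (E → ℝ)) (D : (E → ℝ) → E →L[ℝ] ℝ) (x : E) (n : ℕ) :
    Set (WeakDual ℝ E) :=
  wcch (D '' {φ | φ ∈ C ∧ φ x ∈ Icc (0 : ℝ) (1 / ((n + 1 : ℕ) : ℝ))})

variable {C : Set (E → ℝ)} {D : (E → ℝ) → E →L[ℝ] ℝ} {x : E}

theorem toWD_mem_nearActiveHull {φ : E → ℝ} {n : ℕ} (hφ : φ ∈ C) (h0 : 0 ≤ φ x)
    (hle : φ x ≤ 1 / ((n + 1 : ℕ) : ℝ)) : toWD (D φ) ∈ nearActiveHull C D x n :=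
  subset_closure (subset_convexHull ℝ _ ⟨D φ, ⟨φ, ⟨hφ, h0, hle⟩, rfl⟩, rfl⟩)

theorem nearActiveHull_antitone : Antitone (nearActiveHull C D x) := by
  refine fun m n hmn => wcch_mono (image_mono fun φ ⟨hφ, h0, hle⟩ => ⟨hφ, h0, hle.trans ?_⟩)
  gcongr

theorem isClosed_nearActiveHull (n : ℕ) : IsClosed (nearActiveHull C D x n) :=
  isClosed_closure

theorem nearActiveHull_subset_wcch (n : ℕ) : nearActiveHull C D x n ⊆ wcch (D '' C) :=
  wcch_mono (image_mono fun _ hφ => hφ.1)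

theorem multSet_eq_iInter_nearActiveHull : multSet C D x = ⋂ n, nearActiveHull C D x n := by
  ext y
  simp only [multSet, nearActiveHull, mem_iInter]
  refine ⟨fun h n => h (n + 1) n.succ_pos, fun h n hn => ?_⟩
  obtain ⟨n, rfl⟩ := Nat.exists_eq_add_of_le' hn
  exact h n

theorem nearActiveHull_nonempty (hC : C.Nonempty) (hx : x ∈ polarSet C)
    (hlsc : {φ | φ ∈ C ∧ φ x ≠ 0} = ∅ ∨ EquiLscAt {φ | φ ∈ C ∧ φ x ≠ 0} x)
    (hint : x ∉ interior (polarSet C)) (n : ℕ) : (nearActiveHull C D x n).Nonempty := by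
  by_contra hempty
  have hfar : ∀ φ ∈ C, 1 / ((n + 1 : ℕ) : ℝ) < φ x := fun φ hφ =>
    not_le.mp fun hle => hempty ⟨_, toWD_mem_nearActiveHull hφ (hx φ hφ) hle⟩
  have hactive : {φ | φ ∈ C ∧ φ x ≠ 0} = C :=
    sep_eq_self_iff_mem_true.mpr fun φ hφ =>
      ((one_div_pos.mpr (by positivity)).trans (hfar φ hφ)).ne'
  rw [hactive] at hlsc
  rcases hlsc with rfl | hlsc
  · exact not_nonempty_empty hC
  · exact hint (mem_interior_polarSet_of_forall_lt hlsc (by positivity) hfar)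

theorem convex_multSet : Convex ℝ (multSet C D x) := by
  rw [multSet_eq_iInter_nearActiveHull]
  exact convex_iInter fun _ => (convex_convexHull ℝ _).closure

variable (hcpt : IsCompact (wcch (D '' C)))
include hcpt

theorem bddBelow_apply (v : E) : BddBelow ((fun φ => D φ v) '' C) := by
  obtain ⟨m, hm⟩ := (hcpt.image (WeakDual.eval_continuous v)).bddBelow
  exact ⟨m, forall_mem_image.mpr fun φ hφ =>
    hm ⟨_, subset_closure (subset_convexHull ℝ _ ⟨D φ, ⟨φ, hφ, rfl⟩, rfl⟩), rfl⟩⟩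

theorem isCompact_nearActiveHull (n : ℕ) : IsCompact (nearActiveHull C D x n) :=
  hcpt.of_isClosed_subset (isClosed_nearActiveHull n) (nearActiveHull_subset_wcch n)

theorem isCompact_multSet : IsCompact (multSet C D x) := by
  rw [multSet_eq_iInter_nearActiveHull]
  exact (isCompact_nearActiveHull hcpt 0).of_isClosed_subset
    (isClosed_iInter isClosed_nearActiveHull) (iInter_subset _ 0)

theorem multSet_nonempty (hne : ∀ n, (nearActiveHull C D x n).Nonempty) :
    (multSet C D x).Nonempty := by
  rw [multSet_eq_iInter_nearActiveHull]
  exact IsCompact.nonempty_iInter_of_directed_nonempty_isCompact_isClosed _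
    nearActiveHull_antitone.directed_ge hne (isCompact_nearActiveHull hcpt) isClosed_nearActiveHull

theorem exists_nearActiveHull_subset {U : Set (WeakDual ℝ E)} (hU : IsOpen U)
    (hT : multSet C D x ⊆ U) : ∃ n, nearActiveHull C D x n ⊆ U :=
  exists_subset_nhds_of_isCompact' nearActiveHull_antitone.directed_ge
    (isCompact_nearActiveHull hcpt) isClosed_nearActiveHull
    fun _ hy => hU.mem_nhds (hT (by rwa [multSet_eq_iInter_nearActiveHull]))

end NearActiveHull

section Separation

variable {V : Type*} [AddCommGroup V] [Module ℝ V]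

theorem exists_add_smul_eq_zero_of_zero_mem_convexJoin {p : V} {T : Set V}
    (h : 0 ∈ convexJoin ℝ {p} T) (h0 : (0 : V) ∉ T) :
    ∃ b : ℝ, 0 ≤ b ∧ ∃ q ∈ T, p + b • q = 0 := by
  rw [convexJoin_singleton_left, mem_iUnion₂] at h
  obtain ⟨q, hq, a, b, ha, hb, hab, hcomb⟩ := h
  rcases ha.eq_or_lt with rfl | ha
  · rw [zero_add] at hab
    rw [hab, zero_smul, one_smul, zero_add] at hcomb
    exact absurd (hcomb ▸ hq) h0
  · refine ⟨b / a, div_nonneg hb ha.le, q, hq, ?_⟩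
    calc p + (b / a) • q = a⁻¹ • (a • p + b • q) := by
          rw [smul_add, smul_smul, smul_smul, inv_mul_cancel₀ ha.ne', one_smul, div_eq_inv_mul]
      _ = 0 := by rw [hcomb, smul_zero]

variable [TopologicalSpace V] [ContinuousAdd V] [ContinuousSMul ℝ V]

theorem IsCompact.convexJoin_singleton {T : Set V} (hT : IsCompact T) (p : V) :
    IsCompact (convexJoin ℝ {p} T) := by
  have : convexJoin ℝ {p} T =
      (fun a : ℝ × V => (1 - a.1) • p + a.1 • a.2) '' (Icc 0 1 ×ˢ T) := by
    ext y
    simp only [convexJoin_singleton_left, segment_eq_image, mem_iUnion₂, mem_image, mem_prod,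
      exists_prop, Prod.exists]
    exact ⟨fun ⟨q, hq, θ, hθ, h⟩ => ⟨θ, q, ⟨hθ, hq⟩, h⟩,
      fun ⟨θ, q, ⟨hθ, hq⟩, h⟩ => ⟨q, hq, θ, hθ, h⟩⟩
  rw [this]
  exact (isCompact_Icc.prod hT).image (by fun_prop)

end Separation

section WeakDual

variable {E : Type*} [AddCommGroup E] [Module ℝ E] [TopologicalSpace E]

theorem WeakDual.exists_eval_gt_of_zero_notMem {S : Set (WeakDual ℝ E)} (hS : Convex ℝ S)
    (hSc : IsClosed S) (h0 : 0 ∉ S) : ∃ w : E, ∃ u > 0, ∀ y ∈ S, u < y w := by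
  obtain ⟨g, u, hu, hgS⟩ := geometric_hahn_banach_point_closed hS hSc h0
  obtain ⟨w, hw⟩ := LinearMap.dualEmbedding_surjective (topDualPairing ℝ E) g
  have hgw : ∀ y : WeakDual ℝ E, g y = y w := fun y => by rw [← hw]; rfl
  exact ⟨w, u, by rwa [map_zero] at hu, fun y hy => hgw y ▸ hgS y hy⟩

end WeakDual

theorem zero_mem_convexJoin_multSet {E : Type*} [AddCommGroup E] [Module ℝ E] [TopologicalSpace E]
    {C : Set (E → ℝ)} {D : (E → ℝ) → E →L[ℝ] ℝ} {x : E} (hcpt : IsCompact (wcch (D '' C)))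
    (hne : (multSet C D x).Nonempty) {p : WeakDual ℝ E}
    (hdescent : ∀ (w : E) (n : ℕ), ∀ u > 0, (∀ y ∈ nearActiveHull C D x n, u < y w) → p w ≤ 0) :
    (0 : WeakDual ℝ E) ∈ convexJoin ℝ {p} (multSet C D x) := by
  by_contra h0
  obtain ⟨w, u, hu, hsep⟩ := WeakDual.exists_eval_gt_of_zero_notMem
    ((convex_singleton _).convexJoin convex_multSet)
    ((isCompact_multSet hcpt).convexJoin_singleton _).isClosed h0
  obtain ⟨n, hn⟩ := exists_nearActiveHull_subset hcpt
    (isOpen_lt continuous_const (WeakDual.eval_continuous w))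
    fun q hq => hsep q (subset_convexJoin_right (singleton_nonempty _) hq)
  exact (hdescent w n u hu hn).not_gt
    (hu.trans (hsep _ (subset_convexJoin_left hne (mem_singleton _))))

theorem lagrange_multiplier_rule_general
    {E : Type*} [AddCommGroup E] [Module ℝ E] [TopologicalSpace E]
    [IsTopologicalAddGroup E] [ContinuousSMul ℝ E]
    (Ω : Set E) (hΩ : IsOpen Ω)
    (F : Set E)
    (f : E → ℝ) (f' : E →L[ℝ] ℝ) (C : Set (E → ℝ)) (D : (E → ℝ) → E →L[ℝ] ℝ) (xh : E)
    (hxΩ : xh ∈ Ω) (hxF : xh ∈ F)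
    (hmax : ∀ x ∈ Ω ∩ F, f x ≤ f xh)
    (hf : HasGateauxAt f f' xh)
    (hadm : WeakAdmissibleAt F C D xh) :
    (xh ∈ interior F → f' = 0) ∧
    (xh ∉ interior F →
      ∃ l b : ℝ, 0 ≤ l ∧ 0 ≤ b ∧ (l, b) ≠ (0, 0) ∧
        ∃ xs ∈ multSet C D xh, l • toWD f' + b • xs = 0) ∧
    (xh ∉ interior F → toWD (0 : E →L[ℝ] ℝ) ∉ multSet C D xh →
      ∃ b : ℝ, 0 ≤ b ∧ ∃ xs ∈ multSet C D xh, toWD f' + b • xs = 0) := by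
  obtain ⟨-, hCne, rfl, hequi, hlsc, hcpt⟩ := hadm
  have hdescent : ∀ (w : E) (n : ℕ), ∀ u > 0, (∀ y ∈ nearActiveHull C D xh n, u < y w) →
      toWD f' w ≤ 0 := by
    intro w n u hu hnear
    have hfeasible := hequi.eventually_add_smul_mem_polarSet hxF (bddBelow_apply hcpt w)
      (by positivity) hu fun φ hφ hle => (hnear _ (toWD_mem_nearActiveHull hφ (hxF φ hφ) hle)).le
    have hinΩ : ∀ᶠ t in 𝓝[>] (0 : ℝ), xh + t • w ∈ Ω :=
      eventually_nhdsWithin_of_eventually_nhds (eventually_add_smul_mem (hΩ.mem_nhds hxΩ) w)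
    exact hf.apply_nonpos_of_eventually_le ((hinΩ.and hfeasible).mono fun t ht => hmax _ ht)
  have hmult : xh ∉ interior (polarSet C) → toWD (0 : E →L[ℝ] ℝ) ∉ multSet C D xh →
      ∃ b : ℝ, 0 ≤ b ∧ ∃ xs ∈ multSet C D xh, toWD f' + b • xs = 0 := fun hint h0T =>
    exists_add_smul_eq_zero_of_zero_mem_convexJoin (zero_mem_convexJoin_multSet hcpt
      (multSet_nonempty hcpt (nearActiveHull_nonempty hCne hxF hlsc hint)) hdescent) h0T
  refine ⟨fun hint => hf.eq_zero_of_isLocalMax ?_, fun hint => ?_, hmult⟩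
  · exact mem_of_superset (inter_mem (hΩ.mem_nhds hxΩ) (mem_interior_iff_mem_nhds.mp hint)) hmax
  by_cases h0T : toWD (0 : E →L[ℝ] ℝ) ∈ multSet C D xh
  · exact ⟨0, 1, le_rfl, zero_le_one, by simp, _, h0T, by rw [zero_smul, one_smul, zero_add]; rfl⟩
  · obtain ⟨b, hb, xs, hxs, hzero⟩ := hmult hint h0T
    exact ⟨1, b, zero_le_one, hb, by simp, xs, hxs, by rwa [one_smul]⟩

/-- (Main Lagrange multiplier rule, inequality constraints.) If `xh ∈ Ω`
maximizes `f` over `Ω ∩ F`, `f` is Gateaux differentiable at `xh` and `F` is weak-admissible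
at `xh` determined by `C`, then: if `xh ∈ int(F)` then `d_Gf(xh) = 0`; if `xh ∈ F \ int(F)`
then there exist `(λ*, β*) ∈ ℝ₊ × ℝ₊`, `(λ*, β*) ≠ (0,0)`, and `x* ∈ T_C(xh)` with
`λ* d_Gf(xh) + β* x* = 0`; and if moreover `0 ∉ T_C(xh)` one can take `λ* = 1`. -/
theorem lagrange_multiplier_rule
    {E : Type*} [AddCommGroup E] [Module ℝ E] [TopologicalSpace E]
    [IsTopologicalAddGroup E] [ContinuousSMul ℝ E] [LocallyConvexSpace ℝ E] [T2Space E]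
    (Ω : Set E) (hΩ : IsOpen Ω) (hΩne : Ω.Nonempty)
    (F : Set E) (hFne : F.Nonempty)
    (f : E → ℝ) (f' : E →L[ℝ] ℝ) (C : Set (E → ℝ)) (D : (E → ℝ) → E →L[ℝ] ℝ) (xh : E)
    (hxΩ : xh ∈ Ω) (hxF : xh ∈ F)
    (hmax : ∀ x ∈ Ω ∩ F, f x ≤ f xh)
    (hf : HasGateauxAt f f' xh)
    (hadm : WeakAdmissibleAt F C D xh) :
    (xh ∈ interior F → f' = 0) ∧
    (xh ∉ interior F →
      ∃ l b : ℝ, 0 ≤ l ∧ 0 ≤ b ∧ (l, b) ≠ (0, 0) ∧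
        ∃ xs ∈ multSet C D xh, l • toWD f' + b • xs = 0) ∧
    (xh ∉ interior F → toWD (0 : E →L[ℝ] ℝ) ∉ multSet C D xh →
      ∃ b : ℝ, 0 ≤ b ∧ ∃ xs ∈ multSet C D xh, toWD f' + b • xs = 0) :=
  lagrange_multiplier_rule_general Ω hΩ F f f' C D xh hxΩ hxF hmax hf hadm
end
end
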